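/- arXiv:2412.10841 — 4 statements merged into one kernel-verified Lean document; each statement's English description precedes it below -/
import Mathlib

section
/- Let ν₁, …, νₙ (indices mod n, n ≥ 3) be primitive vectors in ℤ² going counterclockwise around the origin such that each consecutive pair is a positively oriented ℤ-basis (det(νᵢ, νᵢ₊₁) = 1), and let wᵢ be the weights defined by νᵢ₋₁ + νᵢ₊₁ + wᵢ νᵢ = 0. Then ∑_{i=1}^{n} wᵢ = 12 − 3n. -/
open Finset

def det2 (u v : ℤ × ℤ) : ℤ := u.1 * v.2 - u.2 * v.1
def toR (u : ℤ × ℤ) : ℝ × ℝ := ((u.1 : ℝ), (u.2 : ℝ))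
def detR (u v : ℝ × ℝ) : ℝ := u.1 * v.2 - u.2 * v.1
lemma smul_fst (c : ℤ) (u : ℤ × ℤ) : (c • u).1 = c * u.1 := rfl
lemma smul_snd (c : ℤ) (u : ℤ × ℤ) : (c • u).2 = c * u.2 := rfl
lemma rsmul_fst (c : ℝ) (u : ℝ × ℝ) : (c • u).1 = c * u.1 := rfl
lemma rsmul_snd (c : ℝ) (u : ℝ × ℝ) : (c • u).2 = c * u.2 := rfl

lemma toR_fst (u : ℤ × ℤ) : (toR u).1 = (u.1 : ℝ) := rfl
lemma toR_snd (u : ℤ × ℤ) : (toR u).2 = (u.2 : ℝ) := rfl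

lemma detR_toR (u v : ℤ × ℤ) : detR (toR u) (toR v) = (det2 u v : ℝ) := by
  simp [detR, toR, det2]

-- Cramer over ℤ
lemma cramer_int {u v : ℤ × ℤ} (h : det2 u v = 1) (z : ℤ × ℤ) :
    z = det2 z v • u + det2 u z • v := by
  obtain ⟨u1, u2⟩ := u; obtain ⟨v1, v2⟩ := v; obtain ⟨z1, z2⟩ := z
  simp only [det2] at h ⊢
  refine Prod.ext ?_ ?_ <;> simp only [Prod.fst_add, Prod.snd_add, smul_fst, smul_snd]
  · linear_combination (-z1) * h
  · linear_combination (-z2) * h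

-- Cramer over ℝ for points written wrt a det-1 integer basis
lemma cramer_real {u v : ℤ × ℤ} (h : det2 u v = 1) (x : ℝ × ℝ) :
    x = detR x (toR v) • toR u + detR (toR u) x • toR v := by
  obtain ⟨u1, u2⟩ := u; obtain ⟨v1, v2⟩ := v; obtain ⟨x1, x2⟩ := x
  simp only [det2] at h
  have h' : (u1 : ℝ) * v2 - u2 * v1 = 1 := by exact_mod_cast congrArg (Int.cast : ℤ → ℝ) h
  refine Prod.ext ?_ ?_ <;> simp only [Prod.fst_add, Prod.snd_add, rsmul_fst, rsmul_snd, detR, toR]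
  · linear_combination (-x1) * h'
  · linear_combination (-x2) * h'

lemma detR_add_right (u x y : ℝ × ℝ) : detR u (x + y) = detR u x + detR u y := by
  simp [detR, Prod.fst_add, Prod.snd_add]; ring
lemma detR_add_left (u x y : ℝ × ℝ) : detR (x + y) u = detR x u + detR y u := by
  simp [detR, Prod.fst_add, Prod.snd_add]; ring
lemma detR_smul_right (u : ℝ × ℝ) (c : ℝ) (x : ℝ × ℝ) : detR u (c • x) = c * detR u x := by
  simp [detR, rsmul_fst, rsmul_snd]; ring
lemma detR_smul_left (u : ℝ × ℝ) (c : ℝ) (x : ℝ × ℝ) : detR (c • x) u = c * detR x u := by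
  simp [detR, rsmul_fst, rsmul_snd]; ring

lemma det2_add_right (u x y : ℤ × ℤ) : det2 u (x + y) = det2 u x + det2 u y := by
  simp [det2, Prod.fst_add, Prod.snd_add]; ring
lemma det2_add_left (u x y : ℤ × ℤ) : det2 (x + y) u = det2 x u + det2 y u := by
  simp [det2, Prod.fst_add, Prod.snd_add]; ring
lemma det2_smul_right (u : ℤ × ℤ) (c : ℤ) (x : ℤ × ℤ) : det2 u (c • x) = c * det2 u x := by
  simp [det2, smul_fst, smul_snd]; ring
lemma det2_smul_left (u : ℤ × ℤ) (c : ℤ) (x : ℤ × ℤ) : det2 (c • x) u = c * det2 x u := by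
  simp [det2, smul_fst, smul_snd]; ring
lemma det2_swap (u v : ℤ × ℤ) : det2 u v = - det2 v u := by simp [det2]; ring
lemma det2_self (u : ℤ × ℤ) : det2 u u = 0 := by simp [det2]; ring
lemma det2_zero_right (u : ℤ × ℤ) : det2 u 0 = 0 := by simp [det2]
lemma det2_zero_left (u : ℤ × ℤ) : det2 0 u = 0 := by simp [det2]

-- perturbation lemma
lemma pert (a b c d : ℝ) (ha : 0 < a) (hc : 0 < c) :
    ∃ ε : ℝ, 0 < ε ∧ 0 < a + ε * b ∧ 0 < c + ε * d := by
  refine ⟨min (a / (2 * (|b| + 1))) (c / (2 * (|d| + 1))), ?_, ?_, ?_⟩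
  · apply lt_min <;> positivity
  · have h1 : min (a / (2 * (|b| + 1))) (c / (2 * (|d| + 1))) ≤ a / (2 * (|b| + 1)) := min_le_left _ _
    have h2 : 0 < min (a / (2 * (|b| + 1))) (c / (2 * (|d| + 1))) := by apply lt_min <;> positivity
    set ε := min (a / (2 * (|b| + 1))) (c / (2 * (|d| + 1)))
    have hb : -(|b|) ≤ b := neg_abs_le b
    have : ε * b ≥ -(ε * |b|) := by nlinarith [abs_nonneg b]
    have hεb : ε * |b| ≤ a / (2 * (|b| + 1)) * |b| := by nlinarith [abs_nonneg b]
    have : a / (2 * (|b| + 1)) * |b| < a := by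
      rw [div_mul_eq_mul_div, div_lt_iff₀ (by positivity)]
      nlinarith [abs_nonneg b]
    nlinarith
  · have h1 : min (a / (2 * (|b| + 1))) (c / (2 * (|d| + 1))) ≤ c / (2 * (|d| + 1)) := min_le_right _ _
    have h2 : 0 < min (a / (2 * (|b| + 1))) (c / (2 * (|d| + 1))) := by apply lt_min <;> positivity
    set ε := min (a / (2 * (|b| + 1))) (c / (2 * (|d| + 1)))
    have hd : -(|d|) ≤ d := neg_abs_le d
    have : ε * d ≥ -(ε * |d|) := by nlinarith [abs_nonneg d]
    have hεd : ε * |d| ≤ c / (2 * (|d| + 1)) * |d| := by nlinarith [abs_nonneg d]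
    have : c / (2 * (|d| + 1)) * |d| < c := by
      rw [div_mul_eq_mul_div, div_lt_iff₀ (by positivity)]
      nlinarith [abs_nonneg d]
    nlinarith

lemma toR_add (u v : ℤ × ℤ) : toR (u + v) = toR u + toR v := by
  simp [toR, Prod.ext_iff, Prod.fst_add, Prod.snd_add]
lemma toR_smul (c : ℤ) (u : ℤ × ℤ) : toR (c • u) = (c : ℝ) • toR u := by
  simp [toR, Prod.ext_iff, smul_fst, smul_snd, rsmul_fst, rsmul_snd]

-- membership conversion
lemma mem_iff {u v : ℤ × ℤ} (h : det2 u v = 1) (x : ℝ × ℝ) :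
    (∃ s t : ℝ, 0 < s ∧ 0 < t ∧ x = s • toR u + t • toR v) ↔
    (0 < detR (toR u) x ∧ 0 < detR x (toR v)) := by
  constructor
  · rintro ⟨s, t, hs, ht, rfl⟩
    constructor
    · rw [detR_add_right, detR_smul_right, detR_smul_right, detR_toR, detR_toR, det2_self, h]
      push_cast; nlinarith
    · rw [detR_add_left, detR_smul_left, detR_smul_left, detR_toR, detR_toR, det2_self, h]
      push_cast; nlinarith
  · rintro ⟨h1, h2⟩
    exact ⟨detR x (toR v), detR (toR u) x, h2, h1, cramer_real h x⟩

lemma detPt_left (u z v : ℤ × ℤ) (ε : ℝ) :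
    detR (toR u) (toR z + ε • toR v) = (det2 u z : ℝ) + ε * (det2 u v : ℝ) := by
  rw [detR_add_right, detR_smul_right, detR_toR, detR_toR]
lemma detPt_right (u z v : ℤ × ℤ) (ε : ℝ) :
    detR (toR z + ε • toR v) (toR u) = (det2 z u : ℝ) + ε * (det2 v u : ℝ) := by
  rw [detR_add_left, detR_smul_left, detR_toR, detR_toR]

section Fan
variable {n : ℕ} [NeZero n] {ν : ZMod n → ℤ × ℤ}

def OC (ν : ZMod n → ℤ × ℤ) (i : ZMod n) (x : ℝ × ℝ) : Prop :=
  0 < detR (toR (ν i)) x ∧ 0 < detR x (toR (ν (i + 1)))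

variable (hdet : ∀ i : ZMod n, det2 (ν i) (ν (i + 1)) = 1)
variable (hdisj : ∀ i j : ZMod n, i ≠ j → ∀ x : ℝ × ℝ, OC ν i x → OC ν j x → False)

include hdet hdisj

/-- rays are distinct -/
lemma distinct {j k : ZMod n} (hne : j ≠ k) : ν j ≠ ν k := by
  intro heq
  obtain ⟨ε, hε, h1, h2⟩ := pert 1 ((det2 (ν (j+1)) (ν (k+1)) : ℤ) : ℝ) 1
    ((det2 (ν (j+1)) (ν (k+1)) : ℤ) : ℝ) one_pos one_pos
  set y : ℝ × ℝ := toR (ν j) + ε • toR (ν (j+1)) with hy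
  apply hdisj j k hne y
  · constructor
    · rw [hy, detPt_left, det2_self]
      push_cast
      rw [hdet j]; push_cast; nlinarith
    · rw [hy, detPt_right, hdet j, det2_self]
      push_cast; nlinarith
  · constructor
    · rw [hy, heq, detPt_left, det2_self]
      push_cast
      have : det2 (ν k) (ν (j+1)) = det2 (ν j) (ν (j+1)) := by rw [heq]
      rw [this, hdet j]; push_cast; nlinarith
    · rw [hy, detPt_right]
      have : det2 (ν j) (ν (k+1)) = 1 := by rw [heq]; exact hdet k
      rw [this]
      exact_mod_cast h2

/-- integer point of a closed cone is one of its two generating rays -/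
lemma coneG' {k j : ZMod n} (hs : 0 ≤ det2 (ν j) (ν (k + 1))) (ht : 0 ≤ det2 (ν k) (ν j)) :
    j = k ∨ j = k + 1 := by
  set s := det2 (ν j) (ν (k + 1)) with hsdef
  set t := det2 (ν k) (ν j) with htdef
  have hz : ν j = s • ν k + t • ν (k + 1) := cramer_int (hdet k) (ν j)
  rcases eq_or_lt_of_le ht with ht0 | htpos
  · -- t = 0 : ν j = s • ν k
    left
    have hj : ν j = s • ν k := by rw [hz, ← ht0]; simp
    have h1 : s * det2 (ν k) (ν (j+1)) = 1 := by
      have := hdet j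
      rw [hj, det2_smul_left] at this; linarith [this]
    have hs1 : s = 1 := by
      rcases Int.eq_one_or_neg_one_of_mul_eq_one' h1 with ⟨h, _⟩ | ⟨h, _⟩
      · exact h
      · omega
    rw [hs1, one_smul] at hj
    by_contra hne
    exact distinct hdet hdisj hne hj
  rcases eq_or_lt_of_le hs with hs0 | hspos
  · right
    have hj : ν j = t • ν (k+1) := by rw [hz, ← hs0]; simp
    have h1 : t * det2 (ν (k+1)) (ν (j+1)) = 1 := by
      have := hdet j
      rw [hj, det2_smul_left] at this; linarith [this]
    have ht1 : t = 1 := by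
      rcases Int.eq_one_or_neg_one_of_mul_eq_one' h1 with ⟨h, _⟩ | ⟨h, _⟩
      · exact h
      · omega
    rw [ht1, one_smul] at hj
    by_contra hne
    exact distinct hdet hdisj hne hj
  · -- both positive: j = k
    left
    by_contra hne
    obtain ⟨ε, hε, h1, h2⟩ := pert (t : ℝ) ((det2 (ν k) (ν (j+1)) : ℤ) : ℝ)
      (s : ℝ) ((det2 (ν (j+1)) (ν (k+1)) : ℤ) : ℝ) (by exact_mod_cast htpos) (by exact_mod_cast hspos)
    set y : ℝ × ℝ := toR (ν j) + ε • toR (ν (j+1)) with hy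
    apply hdisj j k hne y
    · constructor
      · rw [hy, detPt_left, det2_self, hdet j]; push_cast; nlinarith
      · rw [hy, detPt_right, hdet j, det2_self]; push_cast; nlinarith
    · constructor
      · rw [hy, detPt_left, ← htdef]; exact_mod_cast h1
      · rw [hy, detPt_right, ← hsdef]; exact_mod_cast h2

end Fan

-- more det2 tools
lemma det2_sub_right (u x y : ℤ × ℤ) : det2 u (x - y) = det2 u x - det2 u y := by
  simp [det2, Prod.fst_sub, Prod.snd_sub]; ring
lemma det2_sub_left (u x y : ℤ × ℤ) : det2 (x - y) u = det2 x u - det2 y u := by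
  simp [det2, Prod.fst_sub, Prod.snd_sub]; ring

def dot2 (u v : ℤ × ℤ) : ℤ := u.1 * v.1 + u.2 * v.2
def nsq (u : ℤ × ℤ) : ℤ := u.1 ^ 2 + u.2 ^ 2

lemma lagrange (u v : ℤ × ℤ) : nsq u * nsq v = (dot2 u v) ^ 2 + (det2 u v) ^ 2 := by
  simp [nsq, dot2, det2]; ring

lemma dot2_add_left (u x y : ℤ × ℤ) : dot2 (x + y) u = dot2 x u + dot2 y u := by
  simp [dot2, Prod.fst_add, Prod.snd_add]; ring
lemma dot2_smul_left (u : ℤ × ℤ) (c : ℤ) (x : ℤ × ℤ) : dot2 (c • x) u = c * dot2 x u := by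
  simp [dot2, smul_fst, smul_snd]; ring
lemma nsq_nonneg (u : ℤ × ℤ) : 0 ≤ nsq u := by simp [nsq]; positivity

section Star
variable {n : ℕ} [NeZero n] {ν : ZMod n → ℤ × ℤ} {w : ZMod n → ℤ}
variable (hdet : ∀ i : ZMod n, det2 (ν i) (ν (i + 1)) = 1)
variable (hdisj : ∀ i j : ZMod n, i ≠ j → ∀ x : ℝ × ℝ, OC ν i x → OC ν j x → False)
variable (hw : ∀ i : ZMod n, ν (i - 1) + ν (i + 1) + w i • ν i = 0)

omit [NeZero n] in
include hdet hw in
lemma w_eq (j : ZMod n) : w j = - det2 (ν (j - 1)) (ν (j + 1)) := by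
  have h := congrArg (fun z => det2 z (ν (j + 1))) (hw j)
  simp only [det2_add_left, det2_smul_left, det2_self, det2_zero_left] at h
  rw [hdet j] at h
  linarith [h]

omit [NeZero n] in
include hdet in
lemma hdet_pred (j : ZMod n) : det2 (ν (j - 1)) (ν j) = 1 := by
  have := hdet (j - 1); rwa [sub_add_cancel] at this

include hdet hw in
omit [NeZero n] in
lemma sum_eq (i : ZMod n) : ν (i - 1) + ν (i + 1) = (- w i) • ν i := by
  have h := hw i
  rw [eq_neg_of_add_eq_zero_left h, neg_smul]

include hdet hdisj hw in
set_option maxHeartbeats 1000000 in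
lemma exists_blowdown (hn : 5 ≤ n) : ∃ ρ : ZMod n, ν (ρ - 1) + ν (ρ + 1) = ν ρ := by
  obtain ⟨i, -, hmax⟩ := Finset.exists_max_image Finset.univ (fun j => nsq (ν j))
    ⟨0, Finset.mem_univ 0⟩
  have hz := sum_eq hdet hw i
  set L : ℤ := - w i with hL
  -- N ≥ 1
  have hN1 : 1 ≤ nsq (ν i) := by
    by_contra hcon
    push_neg at hcon
    have h1 := hdet i
    have h1' : (ν i).1 ^ 2 + (ν i).2 ^ 2 < 1 := by simpa [nsq] using hcon
    have hx2 : (ν i).1 ^ 2 = 0 := by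
      linarith [sq_nonneg (ν i).1, sq_nonneg (ν i).2]
    have hy2 : (ν i).2 ^ 2 = 0 := by
      linarith [sq_nonneg (ν i).1, sq_nonneg (ν i).2]
    have hx : (ν i).1 = 0 := by
      have := sq_eq_zero_iff.mp hx2; exact this
    have hy : (ν i).2 = 0 := by
      have := sq_eq_zero_iff.mp hy2; exact this
    simp [det2, hx, hy] at h1
  -- estimate : L ∈ {-1, 0, 1}
  have hLcases : L = 1 ∨ L = 0 ∨ L = -1 := by
    set N := nsq (ν i) with hNdef
    set a := dot2 (ν (i - 1)) (ν i) with ha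
    set b := dot2 (ν (i + 1)) (ν i) with hb
    have lag1 : nsq (ν (i - 1)) * N = a ^ 2 + 1 := by
      have := lagrange (ν (i - 1)) (ν i)
      rw [hdet_pred hdet i] at this; simpa using this
    have lag2 : nsq (ν (i + 1)) * N = b ^ 2 + 1 := by
      have := lagrange (ν (i + 1)) (ν i)
      have hsw : det2 (ν (i + 1)) (ν i) = -1 := by
        rw [det2_swap, hdet i]
      rw [hsw] at this; simpa using this
    have hdd : dot2 (ν i) (ν i) = N := by simp [dot2, nsq, hNdef]; ring
    have hab : a + b = L * N := by
      have h := congrArg (fun z => dot2 z (ν i)) hz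
      simp only [dot2_add_left, dot2_smul_left] at h
      rw [hdd] at h
      exact h
    have hb1 : nsq (ν (i - 1)) ≤ N := hmax _ (Finset.mem_univ _)
    have hb2 : nsq (ν (i + 1)) ≤ N := hmax _ (Finset.mem_univ _)
    have ha2 : a ^ 2 + 1 ≤ N ^ 2 := by nlinarith [nsq_nonneg (ν (i - 1))]
    have hb2' : b ^ 2 + 1 ≤ N ^ 2 := by nlinarith [nsq_nonneg (ν (i + 1))]
    by_contra hcon
    push_neg at hcon
    obtain ⟨h1, h0, hm1⟩ := hcon
    have h4 : 4 ≤ L ^ 2 := by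
      rcases (by omega : 2 ≤ L ∨ L ≤ -2) with h | h <;> nlinarith
    have hsq : (a + b) ^ 2 = L ^ 2 * N ^ 2 := by rw [hab]; ring
    nlinarith [sq_nonneg (a - b), hsq, ha2, hb2', mul_le_mul_of_nonneg_right h4 (sq_nonneg N)]
  rcases hLcases with hL1 | hL0m
  · exact ⟨i, by rw [hz, hL1, one_smul]⟩
  -- d := -L ∈ {0, 1}
  set X := ν (i + 1) with hX
  set Y := ν (i - 1) with hY
  have hdval : det2 X Y = - L := by
    have hYeq : Y = L • ν i - X := by rw [← hz]; abel
    rw [hYeq, det2_sub_right, det2_smul_right, det2_self, det2_swap, hdet i]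
    ring
  have hd0 : 0 ≤ det2 X Y ∧ det2 X Y ≤ 1 := by
    rcases hL0m with h | h <;> rw [hdval, h] <;> norm_num
  have hdXu : det2 (ν i) X = 1 := hdet i
  have hdYu : det2 Y (ν i) = 1 := hdet_pred hdet i
  -- claim 5
  have claim5 : ∀ j : ZMod n, j ≠ i - 1 → j ≠ i → j ≠ i + 1 →
      1 ≤ det2 X (ν j) ∧ 1 ≤ det2 (ν j) Y := by
    intro j hj1 hj2 hj3
    constructor
    · by_contra hcon
      push_neg at hcon
      have hα : 0 ≤ det2 (ν j) X := by rw [det2_swap]; omega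
      rcases le_or_gt 0 (det2 (ν i) (ν j)) with hβ | hβ
      · rcases coneG' hdet hdisj (k := i) (j := j) hα hβ with h | h
        · exact hj2 h
        · exact hj3 h
      · rcases le_or_gt 0 (det2 Y (ν j)) with hδ | hδ
        · have hs' : 0 ≤ det2 (ν j) (ν ((i - 1) + 1)) := by
            rw [sub_add_cancel, det2_swap]; omega
          rcases coneG' hdet hdisj (k := i - 1) (j := j) hs' hδ with h | h
          · exact hj1 h
          · rw [sub_add_cancel] at h; exact hj2 h
        · -- δ < 0 : contradiction
          have hcr := cramer_int hdYu (ν j)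
          have hXj : det2 (ν j) X =
              det2 (ν j) (ν i) * det2 Y X + det2 Y (ν j) * det2 (ν i) X := by
            conv_lhs => rw [hcr]
            rw [det2_add_left, det2_smul_left, det2_smul_left]
          have hYX : det2 Y X = - det2 X Y := by rw [det2_swap]
          have hγ : 0 < det2 (ν j) (ν i) := by
            have : det2 (ν j) (ν i) = - det2 (ν i) (ν j) := by rw [det2_swap]
            omega
          nlinarith [hd0.1, hd0.2, hα]
    · by_contra hcon
      push_neg at hcon
      have hδ' : 0 ≤ det2 Y (ν j) := by rw [det2_swap]; omega
      rcases le_or_gt 0 (det2 (ν j) (ν i)) with hγ | hγ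
      · have hs' : 0 ≤ det2 (ν j) (ν ((i - 1) + 1)) := by rw [sub_add_cancel]; omega
        rcases coneG' hdet hdisj (k := i - 1) (j := j) hs' hδ' with h | h
        · exact hj1 h
        · rw [sub_add_cancel] at h; exact hj2 h
      · rcases le_or_gt 0 (det2 (ν j) X) with hα | hα
        · have hβ' : 0 ≤ det2 (ν i) (ν j) := by rw [det2_swap]; omega
          rcases coneG' hdet hdisj (k := i) (j := j) hα hβ' with h | h
          · exact hj2 h
          · exact hj3 h
        · -- compute det2 (ν j) Y from basis (ν i, X)
          have hcr := cramer_int hdXu (ν j)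
          have hjY : det2 (ν j) Y =
              det2 (ν j) X * det2 (ν i) Y + det2 (ν i) (ν j) * det2 X Y := by
            conv_lhs => rw [hcr]
            rw [det2_add_left, det2_smul_left, det2_smul_left]
          have huY : det2 (ν i) Y = -1 := by rw [det2_swap, hdYu]
          have hβ : 0 < det2 (ν i) (ν j) := by
            have : det2 (ν i) (ν j) = - det2 (ν j) (ν i) := by rw [det2_swap]
            omega
          nlinarith [hd0.1, hd0.2]
  -- plateau argument
  classical
  set f : ℤ × ℤ → ℤ := fun z => det2 z Y + det2 X z with hf
  set J : ℕ → ZMod n := fun t => i + 1 + (t : ZMod n) with hJ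
  set g : ℕ → ℤ := fun t => f (ν (J t)) with hg
  have hcast2 : ((n - 2 : ℕ) : ZMod n) = -2 := by
    have h2 : ((2 : ℕ) : ZMod n) = 2 := by push_cast; ring
    rw [Nat.cast_sub (by omega : 2 ≤ n), ZMod.natCast_self, h2]; ring
  have hJ0 : J 0 = i + 1 := by simp [hJ]
  have hJn2 : J (n - 2) = i - 1 := by
    rw [hJ]; simp only []
    rw [hcast2]; ring
  have hnd : ∀ t : ℕ, 0 < t → t < n → ((t : ℕ) : ZMod n) ≠ 0 := by
    intro t h1 h2 hcon
    rw [ZMod.natCast_eq_zero_iff] at hcon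
    exact absurd (Nat.le_of_dvd h1 hcon) (by omega)
  have hint : ∀ t : ℕ, 1 ≤ t → t ≤ n - 3 → J t ≠ i - 1 ∧ J t ≠ i ∧ J t ≠ i + 1 := by
    intro t h1 h2
    refine ⟨?_, ?_, ?_⟩
    · intro hcon
      have : ((t + 2 : ℕ) : ZMod n) = 0 := by
        push_cast
        rw [hJ] at hcon; simp only [] at hcon
        linear_combination hcon
      exact hnd (t + 2) (by omega) (by omega) this
    · intro hcon
      have : ((t + 1 : ℕ) : ZMod n) = 0 := by
        push_cast
        rw [hJ] at hcon; simp only [] at hcon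
        linear_combination hcon
      exact hnd (t + 1) (by omega) (by omega) this
    · intro hcon
      have : ((t : ℕ) : ZMod n) = 0 := by
        rw [hJ] at hcon; simp only [] at hcon
        linear_combination hcon
      exact hnd t (by omega) (by omega) this
  have hg2 : ∀ t : ℕ, 1 ≤ t → t ≤ n - 3 → 2 ≤ g t := by
    intro t h1 h2
    obtain ⟨c1, c2, c3⟩ := hint t h1 h2
    obtain ⟨d1, d2⟩ := claim5 (J t) c1 c2 c3
    simp only [hg, hf]
    omega
  have hg0 : g 0 = det2 X Y := by
    simp only [hg, hJ0, hf, ← hX, det2_self]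
    omega
  have hgn2 : g (n - 2) = det2 X Y := by
    simp only [hg, hJn2, hf, ← hY, det2_self]
    omega
  have hrel : ∀ t : ℕ, 1 ≤ t → t ≤ n - 3 →
      g (t - 1) + g (t + 1) = (- w (J t)) * g t := by
    intro t h1 h2
    have hJm : J (t - 1) = J t - 1 := by
      rw [hJ]; simp only []
      rw [Nat.cast_sub h1]; push_cast; ring
    have hJp : J (t + 1) = J t + 1 := by
      rw [hJ]; push_cast; ring
    have hs := sum_eq hdet hw (J t)
    have : g (t - 1) + g (t + 1) = f (ν (J t - 1) + ν (J t + 1)) := by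
      simp only [hg, hJm, hJp, hf, det2_add_left, det2_add_right]
      ring
    rw [this, hs]
    simp only [hf, det2_smul_left, det2_smul_right]
    ring
  -- max over interior
  set S : Finset ℕ := Finset.Icc 1 (n - 3) with hS
  have hSne : S.Nonempty := ⟨1, by simp [hS]; omega⟩
  obtain ⟨t0, ht0S, hmaxg⟩ := S.exists_max_image g hSne
  set F := g t0 with hF
  set A : Finset ℕ := S.filter (fun t => g t = F) with hA
  have hAne : A.Nonempty := ⟨t0, by simp [hA, ht0S, hF]⟩
  set r : ℕ := A.max' hAne with hr
  have hrA : r ∈ A := A.max'_mem hAne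
  have hrS : r ∈ S := (Finset.mem_filter.mp hrA).1
  have hrF : g r = F := (Finset.mem_filter.mp hrA).2
  have hr1 : 1 ≤ r := (Finset.mem_Icc.mp hrS).1
  have hr3 : r ≤ n - 3 := (Finset.mem_Icc.mp hrS).2
  have hFmax : ∀ t ∈ S, g t ≤ F := hmaxg
  have hgtF : ∀ t ∈ S, r < t → g t < F := by
    intro t htS hrt
    rcases lt_or_eq_of_le (hFmax t htS) with h | h
    · exact h
    · exfalso
      have : t ∈ A := Finset.mem_filter.mpr ⟨htS, h⟩
      have := A.le_max' t this
      omega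
  have hF2 : 2 ≤ F := by rw [← hrF]; exact hg2 r hr1 hr3
  have hrel' := hrel r hr1 hr3
  rw [hrF] at hrel'
  -- bounds
  have hLb : 0 ≤ g (r - 1) ∧ g (r - 1) ≤ F := by
    rcases eq_or_lt_of_le hr1 with h | h
    · rw [← h]; norm_num
      rw [hg0]
      omega
    · have : r - 1 ∈ S := by rw [hS]; simp; omega
      exact ⟨by linarith [hg2 (r - 1) (by omega) (by omega)], hFmax _ this⟩
  have hRb : 0 ≤ g (r + 1) ∧ g (r + 1) < F := by
    rcases eq_or_lt_of_le hr3 with h | h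
    · have : r + 1 = n - 2 := by omega
      rw [this, hgn2]
      omega
    · have hmem : r + 1 ∈ S := by rw [hS]; simp; omega
      exact ⟨by linarith [hg2 (r + 1) (by omega) (by omega)], hgtF _ hmem (by omega)⟩
  have hposs : 0 < g (r - 1) + g (r + 1) := by
    rcases eq_or_lt_of_le hr1 with h | h
    · have h2 : r + 1 ∈ S := by rw [hS]; simp; omega
      have := hg2 (r + 1) (by omega) (by omega)
      omega
    · have := hg2 (r - 1) (by omega) (by omega)
      omega
  -- conclude c = 1
  set c : ℤ := - w (J r) with hc
  have hc1 : c = 1 := by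
    have h1 : 0 < c * F := by rw [← hrel']; omega
    have h2 : c * F < 2 * F := by rw [← hrel']; omega
    nlinarith
  refine ⟨J r, ?_⟩
  have hs := sum_eq hdet hw (J r)
  rw [← hc, hc1, one_smul] at hs
  exact hs

end Star

lemma det2_ne_zero_left {u v : ℤ × ℤ} (h : det2 u v = 1) : u ≠ 0 := by
  intro hc; rw [hc] at h; simp [det2] at h
lemma det2_ne_zero_right {u v : ℤ × ℤ} (h : det2 u v = 1) : v ≠ 0 := by
  intro hc; rw [hc] at h; simp [det2] at h

lemma smul_eq_zero' {k : ℤ} {v : ℤ × ℤ} (h : k • v = 0) (hv : v ≠ 0) : k = 0 := by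
  by_contra hk
  apply hv
  have h1 : k * v.1 = 0 := congrArg Prod.fst h
  have h2 : k * v.2 = 0 := congrArg Prod.snd h
  have hv1 : v.1 = 0 := by
    rcases mul_eq_zero.mp h1 with h | h
    · exact absurd h hk
    · exact h
  have hv2 : v.2 = 0 := by
    rcases mul_eq_zero.mp h2 with h | h
    · exact absurd h hk
    · exact h
  exact Prod.ext hv1 hv2

section Base
variable {ν : ZMod 3 → ℤ × ℤ} {w : ZMod 3 → ℤ}

lemma base3 (hdet : ∀ i : ZMod 3, det2 (ν i) (ν (i + 1)) = 1)
    (hw : ∀ i : ZMod 3, ν (i - 1) + ν (i + 1) + w i • ν i = 0) :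
    ∑ i : ZMod 3, w i = 3 := by
  have hwj : ∀ j : ZMod 3, w j = 1 := by
    intro j
    rw [w_eq hdet hw j]
    have e1 : j - 1 = (j + 1) + 1 := by
      have : (-1 : ZMod 3) = 2 := by decide
      rw [sub_eq_add_neg, this]; ring
    rw [e1, det2_swap, hdet (j + 1)]
    ring
  rw [show (Finset.univ : Finset (ZMod 3)) = {0, 1, 2} from by decide]
  rw [Finset.sum_insert (by decide), Finset.sum_insert (by decide), Finset.sum_singleton]
  rw [hwj 0, hwj 1, hwj 2]
  norm_num

end Base

section Base4
variable {ν : ZMod 4 → ℤ × ℤ} {w : ZMod 4 → ℤ}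

lemma base4 (hdet : ∀ i : ZMod 4, det2 (ν i) (ν (i + 1)) = 1)
    (hw : ∀ i : ZMod 4, ν (i - 1) + ν (i + 1) + w i • ν i = 0) :
    ∑ i : ZMod 4, w i = 0 := by
  have hs1 := sum_eq hdet hw 1
  have hs3 := sum_eq hdet hw 3
  rw [show (1 - 1 : ZMod 4) = 0 from by decide, show (1 + 1 : ZMod 4) = 2 from by decide] at hs1
  rw [show (3 - 1 : ZMod 4) = 2 from by decide, show (3 + 1 : ZMod 4) = 0 from by decide] at hs3
  have hs0 := sum_eq hdet hw 0
  have hs2 := sum_eq hdet hw 2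
  rw [show (0 - 1 : ZMod 4) = 3 from by decide, show (0 + 1 : ZMod 4) = 1 from by decide] at hs0
  rw [show (2 - 1 : ZMod 4) = 1 from by decide, show (2 + 1 : ZMod 4) = 3 from by decide] at hs2
  have h13 : w 1 • ν 1 = w 3 • ν 3 := by
    have : (- w 1) • ν 1 = (- w 3) • ν 3 := by
      rw [← hs1, ← hs3]; abel
    have h := congrArg Neg.neg this
    simpa [neg_smul] using h
  set e := det2 (ν 1) (ν 3) with he
  have he3 : w 3 * e = 0 := by
    have h := congrArg (fun z => det2 (ν 1) z) h13
    simp only [det2_smul_right, det2_self, mul_zero] at h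
    linarith [h]
  have he1 : w 1 * e = 0 := by
    have h := congrArg (fun z => det2 z (ν 3)) h13
    simp only [det2_smul_left, det2_self, mul_zero] at h
    linarith [h]
  have hsum4 : ∑ i : ZMod 4, w i = w 0 + w 1 + w 2 + w 3 := by
    rw [show (Finset.univ : Finset (ZMod 4)) = {0, 1, 2, 3} from by decide]
    rw [Finset.sum_insert (by decide), Finset.sum_insert (by decide),
      Finset.sum_insert (by decide), Finset.sum_singleton]
    ring
  rcases eq_or_ne e 0 with he0 | hene
  · -- ν 3 = - ν 1
    have hcr := cramer_int (hdet 1) (ν 3)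
    rw [show (1 + 1 : ZMod 4) = 2 from by decide] at hcr
    have h32 : det2 (ν 3) (ν 2) = -1 := by
      rw [det2_swap]
      have := hdet 2
      rw [show (2 + 1 : ZMod 4) = 3 from by decide] at this
      omega
    rw [← he, he0, h32, zero_smul, add_zero] at hcr
    have hν3 : ν 3 = - ν 1 := by rw [hcr]; module
    have hw2 : w 2 = 0 := by
      have : ν 1 + ν 3 = (- w 2) • ν 2 := hs2
      rw [hν3] at this
      simp only [add_neg_cancel] at this
      have := smul_eq_zero' this.symm (det2_ne_zero_left (by
        have h := hdet 2
        rwa [show (2 + 1 : ZMod 4) = 3 from by decide] at h))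
      omega
    have hw0 : w 0 = 0 := by
      have : ν 3 + ν 1 = (- w 0) • ν 0 := hs0
      rw [hν3] at this
      simp only [neg_add_cancel] at this
      have := smul_eq_zero' this.symm (det2_ne_zero_left (hdet 0))
      omega
    have hw13 : w 1 = - w 3 := by
      rw [hν3] at h13
      have : (w 1 + w 3) • ν 1 = 0 := by
        rw [add_smul, h13]; module
      have := smul_eq_zero' this (det2_ne_zero_left (hdet 1))
      omega
    rw [hsum4, hw0, hw2, hw13]; ring
  · have hw1 : w 1 = 0 := by
      rcases mul_eq_zero.mp he1 with h | h
      · exact h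
      · exact absurd h hene
    have hw3 : w 3 = 0 := by
      rcases mul_eq_zero.mp he3 with h | h
      · exact h
      · exact absurd h hene
    have h02 : ν 0 + ν 2 = 0 := by
      rw [hs1, hw1]; module
    have hν2 : ν 2 = - ν 0 := eq_neg_of_add_eq_zero_right h02
    have hw02 : w 0 = - w 2 := by
      have h2' : ν 1 + ν 3 = w 2 • ν 0 := by
        rw [hs2, hν2]; module
      have hz : (w 2 + w 0) • ν 0 = 0 := by
        rw [add_smul, ← h2', show ν 1 + ν 3 = ν 3 + ν 1 from add_comm _ _, hs0]; module
      have := smul_eq_zero' hz (det2_ne_zero_left (hdet 0))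
      omega
    rw [hsum4, hw1, hw3, hw02]; ring

end Base4

lemma detR_swap (u v : ℝ × ℝ) : detR u v = - detR v u := by simp [detR]; ring

/-- weights are determined -/
lemma mk_hw {n : ℕ} {ν : ZMod n → ℤ × ℤ} (hdet : ∀ i : ZMod n, det2 (ν i) (ν (i + 1)) = 1)
    (i : ZMod n) :
    ν (i - 1) + ν (i + 1) + (- det2 (ν (i - 1)) (ν (i + 1))) • ν i = 0 := by
  have hcr := cramer_int (hdet i) (ν (i - 1) + ν (i + 1))
  have h1 : det2 (ν i) (ν (i - 1) + ν (i + 1)) = 0 := by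
    rw [det2_add_right]
    have := hdet_pred hdet i
    have h2 : det2 (ν i) (ν (i - 1)) = -1 := by rw [det2_swap, this]
    rw [h2, hdet i]; ring
  have h2 : det2 (ν (i - 1) + ν (i + 1)) (ν (i + 1)) = det2 (ν (i - 1)) (ν (i + 1)) := by
    rw [det2_add_left, det2_self, add_zero]
  rw [h1, h2, zero_smul, add_zero] at hcr
  rw [neg_smul, ← hcr]
  abel

section Step

variable {n : ℕ} [NeZero n] {ν : ZMod n → ℤ × ℤ} {w : ZMod n → ℤ}

lemma castsub (hn : 3 ≤ n) (a : ℕ) (ha : a ≤ n) : ((n - a : ℕ) : ZMod n) = -(a : ZMod n) := by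
  rw [Nat.cast_sub ha, ZMod.natCast_self]; ring

lemma step [NeZero (n - 1)] (hn : 5 ≤ n)
    (hdet : ∀ i : ZMod n, det2 (ν i) (ν (i + 1)) = 1)
    (hdisj : ∀ i j : ZMod n, i ≠ j → ∀ x : ℝ × ℝ, OC ν i x → OC ν j x → False)
    (hw : ∀ i : ZMod n, ν (i - 1) + ν (i + 1) + w i • ν i = 0)
    (IH : ∀ (ν' : ZMod (n - 1) → ℤ × ℤ) (w' : ZMod (n - 1) → ℤ),
      (∀ i, det2 (ν' i) (ν' (i + 1)) = 1) →
      (∀ i j, i ≠ j → ∀ x : ℝ × ℝ, OC ν' i x → OC ν' j x → False) →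
      (∀ i, ν' (i - 1) + ν' (i + 1) + w' i • ν' i = 0) →
      ∑ i : ZMod (n - 1), w' i = 12 - 3 * ((n - 1 : ℕ) : ℤ)) :
    ∑ i : ZMod n, w i = 12 - 3 * (n : ℤ) := by
  obtain ⟨ρ, hρ⟩ := exists_blowdown hdet hdisj hw hn
  set m : ℕ := n - 1 with hm
  haveI : Fact (1 < m) := ⟨by omega⟩
  -- index embedding
  set E : ZMod m → ZMod n := fun k => ρ + 1 + (k.val : ZMod n) with hE
  have hvlt : ∀ k : ZMod m, k.val < m := fun k => ZMod.val_lt k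
  have hvalcast : ∀ t : ℕ, t < n → ((t : ZMod n)).val = t := fun t ht => ZMod.val_cast_of_lt ht
  have hEadj : ∀ k : ZMod m, k.val < m - 1 → E (k + 1) = E k + 1 := by
    intro k hk
    have h1 : (k + 1).val = k.val + 1 := by
      rw [ZMod.val_add, ZMod.val_one m, Nat.mod_eq_of_lt (by omega)]
    rw [hE]; simp only [h1]; push_cast; ring
  have hElastE : ∀ k : ZMod m, k.val = m - 1 → E k = ρ - 1 := by
    intro k hk
    have : ((m - 1 : ℕ) : ZMod n) = -2 := by
      have : m - 1 = n - 2 := by omega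
      rw [this, castsub (by omega) 2 (by omega)]; push_cast; ring
    rw [hE]; simp only [hk, this]; ring
  have hElastS : ∀ k : ZMod m, k.val = m - 1 → E (k + 1) = ρ + 1 := by
    intro k hk
    have h1 : (k + 1).val = 0 := by
      rw [ZMod.val_add, ZMod.val_one m, hk]
      have : m - 1 + 1 = m := by omega
      rw [this, Nat.mod_self]
    rw [hE]; simp only [h1]; push_cast; ring
  have hEne : ∀ k : ZMod m, E k ≠ ρ := by
    intro k hcon
    have h1 : ((k.val + 1 : ℕ) : ZMod n) = 0 := by
      push_cast
      rw [hE] at hcon; simp only [] at hcon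
      linear_combination hcon
    rw [ZMod.natCast_eq_zero_iff] at h1
    have := Nat.le_of_dvd (by omega) h1
    have := hvlt k
    omega
  have hEinj : Function.Injective E := by
    intro k l hkl
    have h1 : ((k.val : ℕ) : ZMod n) = ((l.val : ℕ) : ZMod n) := by
      rw [hE] at hkl; simp only [] at hkl
      linear_combination hkl
    have h2 : k.val = l.val := by
      have := hvalcast k.val (by have := hvlt k; omega)
      have := hvalcast l.val (by have := hvlt l; omega)
      rw [← this]
      conv_lhs => rw [← hvalcast k.val (by have := hvlt k; omega)]
      rw [h1]
    exact ZMod.val_injective m h2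
  -- merged determinant
  have hmerge : det2 (ν (ρ - 1)) (ν (ρ + 1)) = 1 := by
    have hsub : ν (ρ + 1) = ν ρ - ν (ρ - 1) := by rw [← hρ]; abel
    rw [hsub, det2_sub_right, hdet_pred hdet ρ, det2_self]; ring
  have hwρ : w ρ = -1 := by
    rw [w_eq hdet hw ρ, hmerge]
  -- new fan
  set ν' : ZMod m → ℤ × ℤ := fun k => ν (E k) with hν'
  have hdet' : ∀ k : ZMod m, det2 (ν' k) (ν' (k + 1)) = 1 := by
    intro k
    by_cases hk : k.val = m - 1
    · rw [hν']; simp only [hElastE k hk, hElastS k hk]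
      exact hmerge
    · have hk' : k.val < m - 1 := by have := hvlt k; omega
      rw [hν']; simp only [hEadj k hk']
      exact hdet (E k)
  set w' : ZMod m → ℤ := fun k => - det2 (ν' (k - 1)) (ν' (k + 1)) with hw'def
  have hw' : ∀ k : ZMod m, ν' (k - 1) + ν' (k + 1) + w' k • ν' k = 0 := fun k => mk_hw hdet' k
  -- disjointness of the new fan
  have hdisj' : ∀ k l : ZMod m, k ≠ l → ∀ x : ℝ × ℝ, OC ν' k x → OC ν' l x → False := by
    -- helper for one merged cone
    have merged : ∀ k l : ZMod m, k ≠ l → k.val = m - 1 → ∀ x : ℝ × ℝ,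
        OC ν' k x → OC ν' l x → False := by
      intro k l hkl hk x hx1 hx2
      have hlv : l.val ≠ m - 1 := by
        intro hcon
        exact hkl (ZMod.val_injective m (hk.trans hcon.symm))
      have hlv' : l.val < m - 1 := by have := hvlt l; omega
      set j : ZMod n := E l with hj
      have hjρ : j ≠ ρ := hEne l
      have hjρ1 : j ≠ ρ - 1 := by
        intro hcon
        exact hkl (hEinj (by rw [hElastE k hk, ← hcon]) ).symm
      have hx2' : OC ν j x := by
        have h := hx2
        simp only [hν', OC] at h
        rw [hEadj l hlv'] at h
        exact h
      -- coordinates of x wrt (ν (ρ-1), ν (ρ+1))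
      have hx1' : OC ν (ρ - 1) x ∨ True := Or.inr trivial
      have hx1m : 0 < detR (toR (ν (ρ - 1))) x ∧ 0 < detR x (toR (ν (ρ + 1))) := by
        have h := hx1
        simp only [hν', OC] at h
        rw [hElastE k hk, hElastS k hk] at h
        exact h
      obtain ⟨ht, hs⟩ := hx1m
      set t := detR (toR (ν (ρ - 1))) x with htd
      set s := detR x (toR (ν (ρ + 1))) with hsd
      have hxρ : detR x (toR (ν ρ)) = s - t := by
        have : toR (ν ρ) = toR (ν (ρ - 1)) + toR (ν (ρ + 1)) := by rw [← toR_add, hρ]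
        rw [this, detR_add_right, ← hsd]
        have : detR x (toR (ν (ρ - 1))) = - t := by rw [htd, detR_swap]
        rw [this]; ring
      have hρx : detR (toR (ν ρ)) x = t - s := by
        have : toR (ν ρ) = toR (ν (ρ - 1)) + toR (ν (ρ + 1)) := by rw [← toR_add, hρ]
        rw [this, detR_add_left, ← htd]
        have : detR (toR (ν (ρ + 1))) x = - s := by rw [hsd, detR_swap]
        rw [this]; ring
      rcases lt_trichotomy s t with hst | hst | hst
      · -- x in open cone ρ
        refine hdisj ρ j hjρ.symm x ⟨?_, ?_⟩ hx2'
        · rw [hρx]; linarith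
        · exact hs
      · -- x on the ray through ν ρ : perturb
        -- x = s • toR (ν ρ)
        have hxray : x = s • toR (ν ρ) := by
          have hcr := cramer_real hmerge x
          rw [← htd, ← hsd, ← hst] at hcr
          rw [hcr, ← smul_add, ← toR_add, hρ]
        have hd1 : (0:ℝ) < (det2 (ν j) (ν ρ) : ℝ) := by
          have h := hx2'.1
          rw [hxray, detR_smul_right, detR_toR] at h
          nlinarith [h, hst ▸ ht]
        have hd2 : (0:ℝ) < (det2 (ν ρ) (ν (j + 1)) : ℝ) := by
          have h := hx2'.2
          rw [hxray, detR_smul_left, detR_toR] at h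
          nlinarith [h, hst ▸ ht]
        obtain ⟨ε, hε, h1, h2⟩ := pert ((det2 (ν j) (ν ρ) : ℤ) : ℝ) ((det2 (ν j) (ν (ρ + 1)) : ℤ) : ℝ)
          ((det2 (ν ρ) (ν (j + 1)) : ℤ) : ℝ) ((det2 (ν (ρ + 1)) (ν (j + 1)) : ℤ) : ℝ) hd1 hd2
        set y : ℝ × ℝ := toR (ν ρ) + ε • toR (ν (ρ + 1)) with hy
        refine hdisj ρ j hjρ.symm y ⟨?_, ?_⟩ ⟨?_, ?_⟩
        · rw [hy, detPt_left, det2_self, hdet ρ]; push_cast; nlinarith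
        · rw [hy, detPt_right, hdet ρ, det2_self]; push_cast; nlinarith
        · rw [hy, detPt_left]; exact h1
        · rw [hy, detPt_right]; exact h2
      · -- x in open cone (ρ - 1)
        refine hdisj (ρ - 1) j hjρ1.symm x ⟨?_, ?_⟩ hx2'
        · exact ht
        · rw [sub_add_cancel, hxρ]; linarith
    intro k l hkl x hx1 hx2
    by_cases hk : k.val = m - 1
    · exact merged k l hkl hk x hx1 hx2
    · by_cases hl : l.val = m - 1
      · exact merged l k (Ne.symm hkl) hl x hx2 hx1
      · have hk' : k.val < m - 1 := by have := hvlt k; omega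
        have hl' : l.val < m - 1 := by have := hvlt l; omega
        have hx1' : OC ν (E k) x := by
          have h := hx1
          simp only [hν', OC] at h
          rw [hEadj k hk'] at h
          exact h
        have hx2' : OC ν (E l) x := by
          have h := hx2
          simp only [hν', OC] at h
          rw [hEadj l hl'] at h
          exact h
        exact hdisj (E k) (E l) (fun hc => hkl (hEinj hc)) x hx1' hx2'
  -- apply IH
  have hsum' := IH ν' w' hdet' hdisj' hw'
  -- bookkeeping lemmas
  have hvalneg1 : (-1 : ZMod m).val = m - 1 := by
    have h := castsub (n := m) (by omega) 1 (by omega)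
    push_cast at h
    rw [← h, ZMod.val_cast_of_lt (by omega : m - 1 < m)]
  have hE0 : E 0 = ρ + 1 := by
    rw [hE]; simp only [ZMod.val_zero]; push_cast; ring
  have hEneg1 : E (-1) = ρ - 1 := hElastE (-1) hvalneg1
  have hE1 : E 1 = ρ + 2 := by
    rw [hE]; simp only [ZMod.val_one m]; push_cast; ring
  have hvalneg2 : (-2 : ZMod m).val = m - 2 := by
    have h := castsub (n := m) (by omega) 2 (by omega)
    push_cast at h
    rw [show (-2 : ZMod m) = -(2 : ZMod m) from by ring, ← h,
      ZMod.val_cast_of_lt (by omega : m - 2 < m)]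
  have hEneg2 : E (-2) = ρ - 2 := by
    rw [hE]; simp only [hvalneg2]
    have h2 : ((m - 2 : ℕ) : ZMod n) = -3 := by
      have : m - 2 = n - 3 := by omega
      rw [this, castsub (by omega) 3 (by omega)]; push_cast; ring
    rw [h2]; ring
  have hvalsub : ∀ k : ZMod m, k.val ≠ 0 → (k - 1).val = k.val - 1 := by
    intro k h0
    have hh : ((k - 1) + 1).val = ((k - 1).val + (1 : ZMod m).val) % m := ZMod.val_add _ _
    rw [sub_add_cancel, ZMod.val_one m] at hh
    rcases lt_or_ge ((k - 1).val + 1) m with hlt | hge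
    · rw [Nat.mod_eq_of_lt hlt] at hh; omega
    · have hmm : (k - 1).val + 1 = m := by have := hvlt (k - 1); omega
      rw [hmm, Nat.mod_self] at hh
      exact absurd hh h0
  have hEsub : ∀ k : ZMod m, k.val ≠ 0 → E (k - 1) = E k - 1 := by
    intro k h0
    have h1 : (k - 1).val < m - 1 := by
      rw [hvalsub k h0]; have := hvlt k; omega
    have h2 := hEadj (k - 1) h1
    rw [sub_add_cancel] at h2
    rw [h2]; ring
  have hwmid : ∀ k : ZMod m, k.val ≠ 0 → k.val ≠ m - 1 → w' k = w (E k) := by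
    intro k h0 h1
    simp only [hw'def, hν']
    rw [hEsub k h0, hEadj k (by have := hvlt k; omega)]
    rw [w_eq hdet hw (E k)]
  have hw0 : w' 0 = w (ρ + 1) + 1 := by
    simp only [hw'def, hν']
    rw [zero_sub, zero_add, hEneg1, hE1]
    have hweq : w (ρ + 1) = - det2 (ν ρ) (ν (ρ + 2)) := by
      rw [w_eq hdet hw (ρ + 1), add_sub_cancel_right]
      ring_nf
    have hsplit : det2 (ν ρ) (ν (ρ + 2)) =
        det2 (ν (ρ - 1)) (ν (ρ + 2)) + det2 (ν (ρ + 1)) (ν (ρ + 2)) := by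
      rw [← hρ, det2_add_left]
    have hd1 : det2 (ν (ρ + 1)) (ν (ρ + 2)) = 1 := by
      have := hdet (ρ + 1)
      rwa [show ρ + 1 + 1 = ρ + 2 from by ring] at this
    omega
  have hwlast : w' (-1) = w (ρ - 1) + 1 := by
    simp only [hw'def, hν']
    rw [show (-1 : ZMod m) - 1 = -2 from by ring, show (-1 : ZMod m) + 1 = 0 from by ring,
      hEneg2, hE0]
    have hweq : w (ρ - 1) = - det2 (ν (ρ - 2)) (ν ρ) := by
      rw [w_eq hdet hw (ρ - 1), sub_add_cancel, show ρ - 1 - 1 = ρ - 2 from by ring]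
    have hsplit : det2 (ν (ρ - 2)) (ν ρ) =
        det2 (ν (ρ - 2)) (ν (ρ - 1)) + det2 (ν (ρ - 2)) (ν (ρ + 1)) := by
      rw [← hρ, det2_add_right]
    have hd1 : det2 (ν (ρ - 2)) (ν (ρ - 1)) = 1 := by
      have := hdet (ρ - 2)
      rwa [show ρ - 2 + 1 = ρ - 1 from by ring] at this
    omega
  have hne01 : (0 : ZMod m) ≠ -1 := by
    intro hc
    have := congrArg ZMod.val hc
    rw [ZMod.val_zero, hvalneg1] at this
    omega
  have key : ∑ k : ZMod m, w' k = (∑ j : ZMod n, w j) + 3 := by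
    have h1 : ∑ k : ZMod m, w' k =
        ∑ k : ZMod m, (w (E k) + (if k = 0 then (1:ℤ) else 0) + (if k = -1 then (1:ℤ) else 0)) := by
      apply Finset.sum_congr rfl
      intro k _
      by_cases hk0 : k = 0
      · subst hk0
        rw [hw0, hE0, if_pos rfl, if_neg hne01]
        ring
      · by_cases hk1 : k = -1
        · subst hk1
          rw [hwlast, hEneg1, if_pos rfl, if_neg (fun hc => hne01 hc.symm)]
          ring
        · have h0 : k.val ≠ 0 := by
            intro hc; exact hk0 (by rwa [← ZMod.val_eq_zero])
          have h1 : k.val ≠ m - 1 := by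
            intro hc
            apply hk1
            have : k = ((k.val : ℕ) : ZMod m) := (ZMod.natCast_zmod_val k).symm
            rw [this, hc]
            have := castsub (n := m) (by omega) 1 (by omega)
            push_cast at this
            rw [this]
          rw [hwmid k h0 h1]
          simp [hk0, hk1]
    rw [h1]
    rw [Finset.sum_add_distrib, Finset.sum_add_distrib]
    have h2 : ∑ k : ZMod m, (if k = 0 then (1:ℤ) else 0) = 1 := by
      simp
    have h3 : ∑ k : ZMod m, (if k = -1 then (1:ℤ) else 0) = 1 := by
      simp
    have h4 : ∑ k : ZMod m, w (E k) = ∑ j ∈ Finset.univ.erase ρ, w j := by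
      apply Finset.sum_bij (i := fun (k : ZMod m) (_ : k ∈ Finset.univ) => E k)
      · intro k _
        exact Finset.mem_erase.mpr ⟨hEne k, Finset.mem_univ _⟩
      · intro k _ l _ h
        exact hEinj h
      · intro j hj
        have hjρ : j ≠ ρ := (Finset.mem_erase.mp hj).1
        refine ⟨((j - ρ - 1).val : ZMod m), Finset.mem_univ _, ?_⟩
        have hne : (j - ρ - 1) ≠ -1 := by
          intro hc
          apply hjρ
          linear_combination hc
        have hlt : (j - ρ - 1).val < m := by
          have hlt' : (j - ρ - 1).val < n := ZMod.val_lt _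
          have : (j - ρ - 1).val ≠ n - 1 := by
            intro hc
            apply hne
            have : (j - ρ - 1) = (((j - ρ - 1).val : ℕ) : ZMod n) := (ZMod.natCast_zmod_val _).symm
            rw [this, hc, castsub (by omega) 1 (by omega)]
            push_cast; ring
          omega
        rw [hE]; simp only []
        rw [ZMod.val_cast_of_lt hlt, ZMod.natCast_zmod_val]
        ring
      · intro k _
        rfl
    have h5 : ∑ j ∈ Finset.univ.erase ρ, w j = (∑ j : ZMod n, w j) - w ρ := by
      have := Finset.sum_erase_add Finset.univ w (Finset.mem_univ ρ)
      linarith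
    rw [h2, h3, h4, h5, hwρ]
    ring
  rw [key] at hsum'
  have hcast : ((m : ℕ) : ℤ) = (n : ℤ) - 1 := by
    rw [hm]
    push_cast [Nat.cast_sub (by omega : 1 ≤ n)]
    ring
  rw [hcast] at hsum'
  linarith

end Step

theorem core : ∀ (n : ℕ) [NeZero n], 3 ≤ n → ∀ (ν : ZMod n → ℤ × ℤ) (w : ZMod n → ℤ),
    (∀ i : ZMod n, det2 (ν i) (ν (i + 1)) = 1) →
    (∀ i j : ZMod n, i ≠ j → ∀ x : ℝ × ℝ, OC ν i x → OC ν j x → False) →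
    (∀ i : ZMod n, ν (i - 1) + ν (i + 1) + w i • ν i = 0) →
    ∑ i : ZMod n, w i = 12 - 3 * (n : ℤ) := by
  intro n
  induction n using Nat.strong_induction_on with
  | _ n IH =>
    intro _ hn ν w hdet hdisj hw
    rcases (by omega : n = 3 ∨ n = 4 ∨ 5 ≤ n) with h3 | h4 | h5
    · subst h3
      rw [base3 hdet hw]; norm_num
    · subst h4
      rw [base4 hdet hw]; norm_num
    · haveI : NeZero (n - 1) := ⟨by omega⟩
      exact step h5 hdet hdisj hw
        (fun ν' w' hdet' hdisj' hw' => IH (n - 1) (by omega) (by omega) ν' w' hdet' hdisj' hw')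

/-- For a complete regular 2-dimensional fan with `n ≥ 3` rays `νᵢ` going
counterclockwise (each consecutive pair a positively oriented ℤ-basis, the
cones covering the plane with pairwise disjoint interiors), the weights `wᵢ`
defined by `νᵢ₋₁ + νᵢ₊₁ + wᵢ νᵢ = 0` sum to `12 − 3n`. -/
theorem sum_weights_eq (n : ℕ) [NeZero n] (hn : 3 ≤ n) (ν : ZMod n → ℤ × ℤ)
    (hdet : ∀ i : ZMod n, det2 (ν i) (ν (i + 1)) = 1)
    (hcomplete : ∀ x : ℝ × ℝ, ∃ i : ZMod n, ∃ s t : ℝ, 0 ≤ s ∧ 0 ≤ t ∧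
      x = s • toR (ν i) + t • toR (ν (i + 1)))
    (hdisjoint : ∀ i j : ZMod n, i ≠ j → ∀ x : ℝ × ℝ,
      (∃ s t : ℝ, 0 < s ∧ 0 < t ∧ x = s • toR (ν i) + t • toR (ν (i + 1))) →
      ¬ (∃ s t : ℝ, 0 < s ∧ 0 < t ∧ x = s • toR (ν j) + t • toR (ν (j + 1))))
    (w : ZMod n → ℤ)
    (hw : ∀ i : ZMod n, ν (i - 1) + ν (i + 1) + w i • ν i = 0) :
    ∑ i : ZMod n, w i = 12 - 3 * (n : ℤ) := by
  have hdisj' : ∀ i j : ZMod n, i ≠ j → ∀ x : ℝ × ℝ, OC ν i x → OC ν j x → False := by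
    intro i j hij x h1 h2
    exact hdisjoint i j hij x ((mem_iff (hdet i) x).mpr h1) ((mem_iff (hdet j) x).mpr h2)
  exact core n hn ν w hdet hdisj' hw
end

section
/- In every complete regular 2-dimensional fan with exactly 5 rays, at least two of the five weights equal −1. -/
/-- rotation-friendly: if `a = -1` then one of the others is `-1`. -/
lemma aux_neg1 (a b c d e : ℤ)
    (h1 : a*b = d+1) (h3 : c*d = a+1) (h5 : e*a = c+1) (ha : a = -1) :
    b = -1 ∨ c = -1 ∨ d = -1 ∨ e = -1 := by
  subst ha
  have hcd : c * d = 0 := by linarith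
  rcases mul_eq_zero.mp hcd with hc | hd
  · right; right; right; rw [hc] at h5; linarith
  · left; rw [hd] at h1; linarith

/-- rotation-friendly positivity. -/
lemma aux_pos (a b c d e : ℤ)
    (h1 : a*b = d+1) (h2 : b*c = e+1) (h3 : c*d = a+1) (h4 : d*e = b+1) (h5 : e*a = c+1)
    (ha0 : a ≠ 0) (ham : a ≠ -1) (hdm : d ≠ -1) (he0 : e ≠ 0) : 1 ≤ a := by
  by_contra h
  push_neg at h
  have ha2 : a ≤ -2 := by omega
  have hcd : c * d ≤ -1 := by linarith
  rcases lt_trichotomy d 0 with hd | hd | hd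
  · have hc : 0 < c := by nlinarith
    have hd2 : d ≤ -2 := by omega
    have he : e ≤ -1 := by
      by_contra hh
      push_neg at hh
      nlinarith [mul_nonneg (by linarith : (0:ℤ) ≤ e) (by linarith : (0:ℤ) ≤ -a)]
    have hb : 1 ≤ b := by
      nlinarith [mul_nonneg (by linarith : (0:ℤ) ≤ -d-2) (by linarith : (0:ℤ) ≤ -e-1)]
    nlinarith [mul_pos (by linarith : (0:ℤ) < b) hc]
  · rw [hd, mul_zero] at hcd; omega
  · have hc : c ≤ -1 := by nlinarith
    have hb : b ≤ -1 := by
      by_contra hh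
      push_neg at hh
      nlinarith [mul_nonneg (by linarith : (0:ℤ) ≤ b) (by linarith : (0:ℤ) ≤ -a)]
    have he : e ≤ -1 := by
      have he0' : e ≤ 0 := by
        by_contra hh; push_neg at hh; nlinarith [mul_pos hd hh]
      omega
    nlinarith [mul_nonneg (by linarith : (0:ℤ) ≤ -e-1) (by linarith : (0:ℤ) ≤ -a-2)]

/-- rotation-friendly: if `a = 1` and everything is positive, the pattern `(1,3)`
occurs at a cyclically adjacent pair. -/
lemma aux_one (a b c d e : ℤ)
    (h1 : a*b = d+1) (h3 : c*d = a+1) (h5 : e*a = c+1)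
    (hc : 1 ≤ c) (hd : 1 ≤ d) (ha : a = 1) :
    (a = 1 ∧ b = 3) ∨ (b = 1 ∧ c = 3) ∨ (c = 1 ∧ d = 3) ∨ (d = 1 ∧ e = 3) ∨ (e = 1 ∧ a = 3) := by
  subst ha
  have hcd : c * d = 2 := by linarith
  have hc2 : c ≤ 2 := by nlinarith
  interval_cases c
  · left; constructor
    · rfl
    · have : d = 2 := by linarith
      rw [this] at h1; linarith
  · have hd1 : d = 1 := by linarith
    right; right; right
    left; refine ⟨hd1, ?_⟩
    linarith

/-- Classification of integer solutions of the cyclic system. -/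
lemma core_s7 (a b c d e : ℤ)
    (h1 : a*b = d+1) (h2 : b*c = e+1) (h3 : c*d = a+1) (h4 : d*e = b+1) (h5 : e*a = c+1) :
    ((a = -1 ∧ b = -1) ∨ (a = -1 ∧ c = -1) ∨ (a = -1 ∧ d = -1) ∨ (a = -1 ∧ e = -1) ∨
     (b = -1 ∧ c = -1) ∨ (b = -1 ∧ d = -1) ∨ (b = -1 ∧ e = -1) ∨
     (c = -1 ∧ d = -1) ∨ (c = -1 ∧ e = -1) ∨ (d = -1 ∧ e = -1)) ∨
    ((a = 1 ∧ b = 3) ∨ (b = 1 ∧ c = 3) ∨ (c = 1 ∧ d = 3) ∨ (d = 1 ∧ e = 3) ∨ (e = 1 ∧ a = 3)) := by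
  by_cases ha : a = -1
  · rcases aux_neg1 a b c d e h1 h3 h5 ha with h | h | h | h <;> left <;> omega
  by_cases hb : b = -1
  · rcases aux_neg1 b c d e a h2 h4 h1 hb with h | h | h | h <;> left <;> omega
  by_cases hc : c = -1
  · rcases aux_neg1 c d e a b h3 h5 h2 hc with h | h | h | h <;> left <;> omega
  by_cases hd : d = -1
  · rcases aux_neg1 d e a b c h4 h1 h3 hd with h | h | h | h <;> left <;> omega
  by_cases he : e = -1
  · rcases aux_neg1 e a b c d h5 h2 h4 he with h | h | h | h <;> left <;> omega
  -- all nonzero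
  have ha0 : a ≠ 0 := by intro h; rw [h, zero_mul] at h1; omega
  have hb0 : b ≠ 0 := by intro h; rw [h, zero_mul] at h2; omega
  have hc0 : c ≠ 0 := by intro h; rw [h, zero_mul] at h3; omega
  have hd0 : d ≠ 0 := by intro h; rw [h, zero_mul] at h4; omega
  have he0 : e ≠ 0 := by intro h; rw [h, zero_mul] at h5; omega
  -- all positive
  have pa : 1 ≤ a := aux_pos a b c d e h1 h2 h3 h4 h5 ha0 ha hd he0
  have pb : 1 ≤ b := aux_pos b c d e a h2 h3 h4 h5 h1 hb0 hb he ha0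
  have pc : 1 ≤ c := aux_pos c d e a b h3 h4 h5 h1 h2 hc0 hc ha hb0
  have pd : 1 ≤ d := aux_pos d e a b c h4 h5 h1 h2 h3 hd0 hd hb hc0
  have pe : 1 ≤ e := aux_pos e a b c d h5 h1 h2 h3 h4 he0 he hc hd0
  -- some variable equals 1
  right
  rcases eq_or_lt_of_le pa with h | ha2
  · exact aux_one a b c d e h1 h3 h5 pc pd h.symm
  rcases eq_or_lt_of_le pb with h | hb2
  · rcases aux_one b c d e a h2 h4 h1 pd pe h.symm with h | h | h | h | h <;> omega
  rcases eq_or_lt_of_le pc with h | hc2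
  · rcases aux_one c d e a b h3 h5 h2 pe pa h.symm with h | h | h | h | h <;> omega
  rcases eq_or_lt_of_le pd with h | hd2
  · rcases aux_one d e a b c h4 h1 h3 pa pb h.symm with h | h | h | h | h <;> omega
  rcases eq_or_lt_of_le pe with h | he2
  · rcases aux_one e a b c d h5 h2 h4 pb pc h.symm with h | h | h | h | h <;> omega
  -- all ≥ 2 : contradiction
  exfalso
  have q1 : a + b ≤ d + 1 := by nlinarith
  have q2 : b + c ≤ e + 1 := by nlinarith
  have q3 : c + d ≤ a + 1 := by nlinarith
  have q4 : d + e ≤ b + 1 := by nlinarith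
  have q5 : e + a ≤ c + 1 := by nlinarith
  linarith



/-- If the pattern `w (i+1) = 1, w (i+2) = 3` occurs, the open cones `i` and `i+2`
overlap, contradicting disjointness. -/
lemma geo (ν : ZMod 5 → ℤ × ℤ) (w : ZMod 5 → ℤ)
    (hdisjoint : ∀ i j : ZMod 5, i ≠ j → ∀ x : ℝ × ℝ,
      (∃ s t : ℝ, 0 < s ∧ 0 < t ∧ x = s • toR (ν i) + t • toR (ν (i + 1))) →
      ¬ (∃ s t : ℝ, 0 < s ∧ 0 < t ∧ x = s • toR (ν j) + t • toR (ν (j + 1))))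
    (hw : ∀ i : ZMod 5, ν (i - 1) + ν (i + 1) + w i • ν i = 0)
    (i : ZMod 5) (hw1 : w (i + 1) = 1) (hw2 : w (i + 2) = 3) : False := by
  have e1 := hw (i + 1)
  rw [show i + 1 - 1 = i from by ring, show i + 1 + 1 = i + 2 from by ring, hw1] at e1
  have e2 := hw (i + 2)
  rw [show i + 2 - 1 = i + 1 from by ring, show i + 2 + 1 = i + 3 from by ring, hw2] at e2
  have a1 := congrArg Prod.fst e1
  have a2 := congrArg Prod.snd e1
  have b1 := congrArg Prod.fst e2
  have b2 := congrArg Prod.snd e2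
  simp only [Prod.fst_add, Prod.snd_add, Prod.smul_fst, Prod.smul_snd, smul_eq_mul,
    Prod.fst_zero, Prod.snd_zero, one_mul] at a1 a2 b1 b2
  have hne : i ≠ i + 2 := by
    have : ∀ j : ZMod 5, j ≠ j + 2 := by decide
    exact this i
  have c1 : (3:ℤ) * (ν i).1 + (ν (i+1)).1 = 3 * (ν (i+2)).1 + 2 * (ν (i+3)).1 := by linarith
  have c2 : (3:ℤ) * (ν i).2 + (ν (i+1)).2 = 3 * (ν (i+2)).2 + 2 * (ν (i+3)).2 := by linarith
  have c1R : (3:ℝ) * ((ν i).1 : ℝ) + ((ν (i+1)).1 : ℝ)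
      = 3 * ((ν (i+2)).1 : ℝ) + 2 * ((ν (i+3)).1 : ℝ) := by exact_mod_cast c1
  have c2R : (3:ℝ) * ((ν i).2 : ℝ) + ((ν (i+1)).2 : ℝ)
      = 3 * ((ν (i+2)).2 : ℝ) + 2 * ((ν (i+3)).2 : ℝ) := by exact_mod_cast c2
  refine hdisjoint i (i + 2) hne ((3:ℝ) • toR (ν i) + (1:ℝ) • toR (ν (i+1)))
    ⟨3, 1, by norm_num, by norm_num, rfl⟩ ⟨3, 2, by norm_num, by norm_num, ?_⟩
  rw [show i + 2 + 1 = i + 3 from by ring]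
  simp only [toR, Prod.smul_mk, Prod.mk_add_mk, smul_eq_mul, Prod.mk.injEq]
  constructor <;> [skip; skip] <;> push_cast <;> [linarith [c1R]; linarith [c2R]]

/-- In every complete regular 2-dimensional fan with exactly 5 rays, at least
two of the five weights equal `−1`. -/
theorem fan_five_rays_two_minus_one (ν : ZMod 5 → ℤ × ℤ)
    (hdet : ∀ i : ZMod 5, det2 (ν i) (ν (i + 1)) = 1)
    (hcomplete : ∀ x : ℝ × ℝ, ∃ i : ZMod 5, ∃ s t : ℝ, 0 ≤ s ∧ 0 ≤ t ∧
      x = s • toR (ν i) + t • toR (ν (i + 1)))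
    (hdisjoint : ∀ i j : ZMod 5, i ≠ j → ∀ x : ℝ × ℝ,
      (∃ s t : ℝ, 0 < s ∧ 0 < t ∧ x = s • toR (ν i) + t • toR (ν (i + 1))) →
      ¬ (∃ s t : ℝ, 0 < s ∧ 0 < t ∧ x = s • toR (ν j) + t • toR (ν (j + 1))))
    (w : ZMod 5 → ℤ)
    (hw : ∀ i : ZMod 5, ν (i - 1) + ν (i + 1) + w i • ν i = 0) :
    ∃ i j : ZMod 5, i ≠ j ∧ w i = -1 ∧ w j = -1 := by
  have h0 := hw 0; have h1 := hw 1; have h2 := hw 2; have h3 := hw 3; have h4 := hw 4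
  rw [show (0:ZMod 5) - 1 = 4 from by decide, show (0:ZMod 5) + 1 = 1 from by decide] at h0
  rw [show (1:ZMod 5) - 1 = 0 from by decide, show (1:ZMod 5) + 1 = 2 from by decide] at h1
  rw [show (2:ZMod 5) - 1 = 1 from by decide, show (2:ZMod 5) + 1 = 3 from by decide] at h2
  rw [show (3:ZMod 5) - 1 = 2 from by decide, show (3:ZMod 5) + 1 = 4 from by decide] at h3
  rw [show (4:ZMod 5) - 1 = 3 from by decide, show (4:ZMod 5) + 1 = 0 from by decide] at h4
  have h0a := congrArg Prod.fst h0; have h0b := congrArg Prod.snd h0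
  have h1a := congrArg Prod.fst h1; have h1b := congrArg Prod.snd h1
  have h2a := congrArg Prod.fst h2; have h2b := congrArg Prod.snd h2
  have h3a := congrArg Prod.fst h3; have h3b := congrArg Prod.snd h3
  have h4a := congrArg Prod.fst h4; have h4b := congrArg Prod.snd h4
  simp only [Prod.fst_add, Prod.snd_add, Prod.smul_fst, Prod.smul_snd, smul_eq_mul,
    Prod.fst_zero, Prod.snd_zero] at h0a h0b h1a h1b h2a h2b h3a h3b h4a h4b
  have hD := hdet 0
  rw [show (0:ZMod 5) + 1 = 1 from by decide] at hD
  simp only [det2] at hD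
  -- the cyclic Diophantine system
  have hX : w 2 * w 3 = w 0 + 1 := by
    linear_combination (-(ν 1).2) * (h0a - h3a + w 3 * h2a + (1 - w 3 * w 2) * h1a)
      + (ν 1).1 * (h0b - h3b + w 3 * h2b + (1 - w 3 * w 2) * h1b)
      + (w 0 + 1 - w 2 * w 3) * hD
  have hY : w 1 + w 3 + 1 - w 1 * w 2 * w 3 = 0 := by
    linear_combination (-(ν 0).2) * (h0a - h3a + w 3 * h2a + (1 - w 3 * w 2) * h1a)
      + (ν 0).1 * (h0b - h3b + w 3 * h2b + (1 - w 3 * w 2) * h1b)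
      - (w 1 + w 3 + 1 - w 1 * w 2 * w 3) * hD
  have hP : 1 + w 2 + w 4 - w 2 * w 3 * w 4 = 0 := by
    linear_combination (ν 1).2 * (h4a - h2a - w 4 * h3a + w 4 * w 3 * h2a
        + (w 2 + w 4 - w 4 * w 3 * w 2) * h1a)
      - (ν 1).1 * (h4b - h2b - w 4 * h3b + w 4 * w 3 * h2b
        + (w 2 + w 4 - w 4 * w 3 * w 2) * h1b)
      - (1 + w 2 + w 4 - w 2 * w 3 * w 4) * hD
  have hQ : -1 + w 3 * w 4 + w 1 * w 2 + w 1 * w 4 - w 1 * w 2 * w 3 * w 4 = 0 := by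
    linear_combination (-(ν 0).2) * (h4a - h2a - w 4 * h3a + w 4 * w 3 * h2a
        + (w 2 + w 4 - w 4 * w 3 * w 2) * h1a)
      + (ν 0).1 * (h4b - h2b - w 4 * h3b + w 4 * w 3 * h2b
        + (w 2 + w 4 - w 4 * w 3 * w 2) * h1b)
      - (-1 + w 3 * w 4 + w 1 * w 2 + w 1 * w 4 - w 1 * w 2 * w 3 * w 4) * hD
  have e1 : w 0 * w 1 = w 3 + 1 := by linear_combination (-(w 1)) * hX - hY
  have e5 : w 4 * w 0 = w 2 + 1 := by linear_combination (-(w 4)) * hX - hP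
  have e2 : w 1 * w 2 = w 4 + 1 := by linear_combination hQ - w 4 * hY
  -- the fifth equation
  rcases eq_or_ne (w 0) 0 with ha0 | ha0
  · have hd : w 3 = -1 := by rw [ha0, zero_mul] at e1; omega
    have hc : w 2 = -1 := by rw [hd] at hX; rw [ha0] at hX; omega
    exact ⟨2, 3, by decide, hc, hd⟩
  have e4 : w 3 * w 4 = w 1 + 1 := by
    have key : w 0 * (w 3 * w 4 - w 1 - 1) = 0 := by
      linear_combination w 3 * e5 + hX - e1
    rcases mul_eq_zero.mp key with h | h
    · exact absurd h ha0
    · linarith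
  rcases core_s7 (w 0) (w 1) (w 2) (w 3) (w 4) e1 e2 hX e4 e5 with htwo | hpat
  · rcases htwo with ⟨x,y⟩|⟨x,y⟩|⟨x,y⟩|⟨x,y⟩|⟨x,y⟩|⟨x,y⟩|⟨x,y⟩|⟨x,y⟩|⟨x,y⟩|⟨x,y⟩
    · exact ⟨0, 1, by decide, x, y⟩
    · exact ⟨0, 2, by decide, x, y⟩
    · exact ⟨0, 3, by decide, x, y⟩
    · exact ⟨0, 4, by decide, x, y⟩
    · exact ⟨1, 2, by decide, x, y⟩
    · exact ⟨1, 3, by decide, x, y⟩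
    · exact ⟨1, 4, by decide, x, y⟩
    · exact ⟨2, 3, by decide, x, y⟩
    · exact ⟨2, 4, by decide, x, y⟩
    · exact ⟨3, 4, by decide, x, y⟩
  · rcases hpat with ⟨x,y⟩|⟨x,y⟩|⟨x,y⟩|⟨x,y⟩|⟨x,y⟩
    · exact (geo ν w hdisjoint hw 4
        (by rw [show (4:ZMod 5)+1 = 0 from by decide]; exact x)
        (by rw [show (4:ZMod 5)+2 = 1 from by decide]; exact y)).elim
    · exact (geo ν w hdisjoint hw 0
        (by rw [show (0:ZMod 5)+1 = 1 from by decide]; exact x)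
        (by rw [show (0:ZMod 5)+2 = 2 from by decide]; exact y)).elim
    · exact (geo ν w hdisjoint hw 1
        (by rw [show (1:ZMod 5)+1 = 2 from by decide]; exact x)
        (by rw [show (1:ZMod 5)+2 = 3 from by decide]; exact y)).elim
    · exact (geo ν w hdisjoint hw 2
        (by rw [show (2:ZMod 5)+1 = 3 from by decide]; exact x)
        (by rw [show (2:ZMod 5)+2 = 4 from by decide]; exact y)).elim
    · exact (geo ν w hdisjoint hw 3
        (by rw [show (3:ZMod 5)+1 = 4 from by decide]; exact x)
        (by rw [show (3:ZMod 5)+2 = 0 from by decide]; exact y)).elim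
end

section
/- Every complete regular 2-dimensional fan with exactly 6 rays having exactly one weight equal to −1 has, up to cyclic relabeling and reflection, weight vector (−1, −2, a, 0, −a−1, −2) for some integer a ≥ 1. -/
/-- The cyclic weight vector `(−1, −2, a, 0, −a−1, −2)` of the graph `Γ(a)`. -/
def gammaWeights (a : ℤ) : ZMod 6 → ℤ := fun i =>
  if i = 0 then -1 else if i = 1 then -2 else if i = 2 then a
  else if i = 3 then 0 else if i = 4 then -a - 1 else -2

private lemma indep_aux {x0 y0 x1 y1 p q : ℤ} (hd : x0 * y1 - y0 * x1 = 1)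
    (h1 : p * x0 + q * x1 = 0) (h2 : p * y0 + q * y1 = 0) : p = 0 ∧ q = 0 :=
  ⟨by linear_combination y1 * h1 - x1 * h2 - p * hd,
   by linear_combination (-y0) * h1 + x0 * h2 - q * hd⟩

private lemma cone_pt (u v : ℤ × ℤ) (s t a b : ℤ)
    (h1 : a = s * u.1 + t * v.1) (h2 : b = s * u.2 + t * v.2) :
    ((a : ℝ), (b : ℝ)) = (s : ℝ) • toR u + (t : ℝ) • toR v := by
  simp only [toR, Prod.smul_mk, Prod.mk_add_mk, smul_eq_mul, Prod.mk.injEq]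
  constructor <;> · push_cast [h1, h2]; ring

private lemma clash (ν : ZMod 6 → ℤ × ℤ)
    (hdisjoint : ∀ i j : ZMod 6, i ≠ j → ∀ x : ℝ × ℝ,
      (∃ s t : ℝ, 0 < s ∧ 0 < t ∧ x = s • toR (ν i) + t • toR (ν (i + 1))) →
      ¬ (∃ s t : ℝ, 0 < s ∧ 0 < t ∧ x = s • toR (ν j) + t • toR (ν (j + 1))))
    (i₀ : ZMod 6) (p q s t : ℤ) (hp : 0 < p) (hq : 0 < q) (hs : 0 < s) (ht : 0 < t)
    (h1 : p * (ν i₀).1 + q * (ν (i₀+1)).1 = s * (ν (i₀+3)).1 + t * (ν (i₀+4)).1)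
    (h2 : p * (ν i₀).2 + q * (ν (i₀+1)).2 = s * (ν (i₀+3)).2 + t * (ν (i₀+4)).2) :
    False := by
  have hne : i₀ ≠ i₀ + 3 := by
    intro h
    have : (3 : ZMod 6) = 0 := add_eq_left.mp h.symm
    exact absurd this (by decide)
  have h34 : i₀ + 3 + 1 = i₀ + 4 := by ring
  refine hdisjoint i₀ (i₀+3) hne
    (((p * (ν i₀).1 + q * (ν (i₀+1)).1 : ℤ) : ℝ), ((p * (ν i₀).2 + q * (ν (i₀+1)).2 : ℤ) : ℝ))
    ⟨(p : ℝ), (q : ℝ), by exact_mod_cast hp, by exact_mod_cast hq, cone_pt _ _ _ _ _ _ rfl rfl⟩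
    ⟨(s : ℝ), (t : ℝ), by exact_mod_cast hs, by exact_mod_cast ht, ?_⟩
  rw [h34]
  exact cone_pt _ _ _ _ _ _ h1 h2

set_option maxHeartbeats 1000000 in
/-- Every complete regular 2-dimensional fan with exactly 6 rays having exactly
one weight equal to `−1` has, up to cyclic relabeling and reflection, weight
vector `(−1, −2, a, 0, −a−1, −2)` for some integer `a ≥ 1`. -/
theorem fan_six_rays_one_minus_one (ν : ZMod 6 → ℤ × ℤ)
    (hdet : ∀ i : ZMod 6, det2 (ν i) (ν (i + 1)) = 1)
    (hcomplete : ∀ x : ℝ × ℝ, ∃ i : ZMod 6, ∃ s t : ℝ, 0 ≤ s ∧ 0 ≤ t ∧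
      x = s • toR (ν i) + t • toR (ν (i + 1)))
    (hdisjoint : ∀ i j : ZMod 6, i ≠ j → ∀ x : ℝ × ℝ,
      (∃ s t : ℝ, 0 < s ∧ 0 < t ∧ x = s • toR (ν i) + t • toR (ν (i + 1))) →
      ¬ (∃ s t : ℝ, 0 < s ∧ 0 < t ∧ x = s • toR (ν j) + t • toR (ν (j + 1))))
    (w : ZMod 6 → ℤ)
    (hw : ∀ i : ZMod 6, ν (i - 1) + ν (i + 1) + w i • ν i = 0)
    (hone : ∃! i : ZMod 6, w i = -1) :
    ∃ a : ℤ, 1 ≤ a ∧ ∃ c : ZMod 6,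
      (∀ i : ZMod 6, w (c + i) = gammaWeights a i) ∨
      (∀ i : ZMod 6, w (c - i) = gammaWeights a i) := by
  obtain ⟨i₀, hi₀, huniq⟩ := hone
  have enum : ∀ i : ZMod 6, i = 0 ∨ i = 1 ∨ i = 2 ∨ i = 3 ∨ i = 4 ∨ i = 5 := by decide
  have k1 : ∀ j : ZMod 6, j - 1 = j + 5 := by decide
  have k2 : ∀ j : ZMod 6, j + 5 + 1 = j := by decide
  have h0 := hw i₀
  rw [k1 i₀] at h0
  have h1 := hw (i₀ + 1)
  rw [show i₀ + 1 - 1 = i₀ by ring, show i₀ + 1 + 1 = i₀ + 2 by ring] at h1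
  have h2 := hw (i₀ + 2)
  rw [show i₀ + 2 - 1 = i₀ + 1 by ring, show i₀ + 2 + 1 = i₀ + 3 by ring] at h2
  have h3 := hw (i₀ + 3)
  rw [show i₀ + 3 - 1 = i₀ + 2 by ring, show i₀ + 3 + 1 = i₀ + 4 by ring] at h3
  have h4 := hw (i₀ + 4)
  rw [show i₀ + 4 - 1 = i₀ + 3 by ring, show i₀ + 4 + 1 = i₀ + 5 by ring] at h4
  have h5 := hw (i₀ + 5)
  rw [show i₀ + 5 - 1 = i₀ + 4 by ring, k2 i₀] at h5
  have comp : ∀ (u v z : ℤ × ℤ) (m : ℤ), u + v + m • z = 0 →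
      u.1 + v.1 + m * z.1 = 0 ∧ u.2 + v.2 + m * z.2 = 0 := by
    intro u v z m h
    rw [Prod.ext_iff] at h
    simpa using h
  obtain ⟨F0, G0⟩ := comp _ _ _ _ h0
  obtain ⟨F1, G1⟩ := comp _ _ _ _ h1
  obtain ⟨F2, G2⟩ := comp _ _ _ _ h2
  obtain ⟨F3, G3⟩ := comp _ _ _ _ h3
  obtain ⟨F4, G4⟩ := comp _ _ _ _ h4
  obtain ⟨F5, G5⟩ := comp _ _ _ _ h5
  have d0 : (ν i₀).1 * (ν (i₀+1)).2 - (ν i₀).2 * (ν (i₀+1)).1 = 1 := hdet i₀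
  -- derived component identities
  have hx2 : (ν (i₀+2)).1 = -(ν i₀).1 - w (i₀+1) * (ν (i₀+1)).1 := by linear_combination F1
  have hy2 : (ν (i₀+2)).2 = -(ν i₀).2 - w (i₀+1) * (ν (i₀+1)).2 := by linear_combination G1
  have hx5 : (ν (i₀+5)).1 = (ν i₀).1 - (ν (i₀+1)).1 := by
    linear_combination F0 - (ν i₀).1 * hi₀
  have hy5 : (ν (i₀+5)).2 = (ν i₀).2 - (ν (i₀+1)).2 := by
    linear_combination G0 - (ν i₀).2 * hi₀
  have hx3 : (ν (i₀+3)).1 =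
      w (i₀+2) * (ν i₀).1 + (w (i₀+2) * w (i₀+1) - 1) * (ν (i₀+1)).1 := by
    linear_combination F2 - w (i₀+2) * hx2
  have hy3 : (ν (i₀+3)).2 =
      w (i₀+2) * (ν i₀).2 + (w (i₀+2) * w (i₀+1) - 1) * (ν (i₀+1)).2 := by
    linear_combination G2 - w (i₀+2) * hy2
  have hx4 : (ν (i₀+4)).1 = (-1 - w (i₀+5)) * (ν i₀).1 + w (i₀+5) * (ν (i₀+1)).1 := by
    linear_combination F5 - w (i₀+5) * hx5
  have hy4 : (ν (i₀+4)).2 = (-1 - w (i₀+5)) * (ν i₀).2 + w (i₀+5) * (ν (i₀+1)).2 := by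
    linear_combination G5 - w (i₀+5) * hy5
  -- coefficient equations
  have P1 : (w (i₀+3) * w (i₀+2) - 2 - w (i₀+5)) * (ν i₀).1 +
      (w (i₀+3) * (w (i₀+2) * w (i₀+1) - 1) - w (i₀+1) + w (i₀+5)) * (ν (i₀+1)).1 = 0 := by
    linear_combination F3 - hx2 - hx4 - w (i₀+3) * hx3
  have Q1 : (w (i₀+3) * w (i₀+2) - 2 - w (i₀+5)) * (ν i₀).2 +
      (w (i₀+3) * (w (i₀+2) * w (i₀+1) - 1) - w (i₀+1) + w (i₀+5)) * (ν (i₀+1)).2 = 0 := by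
    linear_combination G3 - hy2 - hy4 - w (i₀+3) * hy3
  have P2 : (w (i₀+2) + 1 - w (i₀+4) * (1 + w (i₀+5))) * (ν i₀).1 +
      (w (i₀+2) * w (i₀+1) - 2 + w (i₀+4) * w (i₀+5)) * (ν (i₀+1)).1 = 0 := by
    linear_combination F4 - hx3 - hx5 - w (i₀+4) * hx4
  have Q2 : (w (i₀+2) + 1 - w (i₀+4) * (1 + w (i₀+5))) * (ν i₀).2 +
      (w (i₀+2) * w (i₀+1) - 2 + w (i₀+4) * w (i₀+5)) * (ν (i₀+1)).2 = 0 := by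
    linear_combination G4 - hy3 - hy5 - w (i₀+4) * hy4
  obtain ⟨E1, E2⟩ := indep_aux d0 P1 Q1
  obtain ⟨E3, E4⟩ := indep_aux d0 P2 Q2
  -- uniqueness of the -1 weight
  have huq : ∀ k : ZMod 6, k ≠ 0 → w (i₀ + k) ≠ -1 := by
    intro k hk h
    exact hk (add_eq_left.mp (huniq (i₀ + k) h))
  have hbne := huq 1 (by decide)
  have hcne := huq 2 (by decide)
  have hgne := huq 3 (by decide)
  have hene := huq 4 (by decide)
  have hfne := huq 5 (by decide)
  set b := w (i₀+1) with hbdef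
  set c := w (i₀+2) with hcdef
  set g := w (i₀+3) with hgdef
  set e := w (i₀+4) with hedef
  set f := w (i₀+5) with hfdef
  clear_value b c g e f
  -- nonvanishing
  have hc0 : c ≠ 0 := by
    intro h
    have hf2 : f = -2 := by linear_combination g * h - E1
    exact hene (by linear_combination E3 - h + e * hf2)
  have he0 : e ≠ 0 := by
    intro h
    exact hcne (by linear_combination E3 + (1 + f) * h)
  have hgsplit : g = 0 ∨ 1 ≤ g ∨ g ≤ -2 := by omega
  rcases hgsplit with hg0 | hg1 | hgm
  · -- the good case: weights (-1, -2, c, 0, -c-1, -2)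
    have hf2 : f = -2 := by linear_combination -E1 + c * hg0
    have hb2 : b = -2 := by linear_combination -E2 + (c * b - 1) * hg0 + hf2
    have heval : e = -c - 1 := by linear_combination E3 + e * hf2
    have hcs : 1 ≤ c ∨ c ≤ -2 := by omega
    rcases hcs with hcge | hcle
    · refine ⟨c, hcge, i₀, Or.inl fun i => ?_⟩
      rcases enum i with h|h|h|h|h|h <;> subst h
      · rw [show gammaWeights c 0 = -1 from rfl, add_zero]; exact hi₀
      · rw [show gammaWeights c 1 = -2 from rfl, ← hbdef]; exact hb2
      · rw [show gammaWeights c 2 = c from rfl, ← hcdef]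
      · rw [show gammaWeights c 3 = 0 from rfl, ← hgdef]; exact hg0
      · rw [show gammaWeights c 4 = -c - 1 from rfl, ← hedef]; exact heval
      · rw [show gammaWeights c 5 = -2 from rfl, ← hfdef]; exact hf2
    · refine ⟨-c - 1, by omega, i₀, Or.inr fun i => ?_⟩
      have m2 : ∀ j : ZMod 6, j - 2 = j + 4 := by decide
      have m3 : ∀ j : ZMod 6, j - 3 = j + 3 := by decide
      have m4 : ∀ j : ZMod 6, j - 4 = j + 2 := by decide
      have m5 : ∀ j : ZMod 6, j - 5 = j + 1 := by decide
      rcases enum i with h|h|h|h|h|h <;> subst h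
      · rw [show gammaWeights (-c-1) 0 = -1 from rfl, sub_zero]; exact hi₀
      · rw [show gammaWeights (-c-1) 1 = -2 from rfl, k1 i₀, ← hfdef]; exact hf2
      · rw [show gammaWeights (-c-1) 2 = -c-1 from rfl, m2 i₀, ← hedef]; exact heval
      · rw [show gammaWeights (-c-1) 3 = 0 from rfl, m3 i₀, ← hgdef]; exact hg0
      · rw [show gammaWeights (-c-1) 4 = -(-c-1) - 1 from rfl, m4 i₀, ← hcdef]; ring
      · rw [show gammaWeights (-c-1) 5 = -2 from rfl, m5 i₀, ← hbdef]; exact hb2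
  · -- branch 1 ≤ g : leads to the five exceptional solutions, all contradicting hdisjoint
    exfalso
    have hM : g * c * e - c - e - 1 = 0 := by linear_combination e * E1 - E3
    have hcb : c * b = e - c + 1 := by linear_combination E4 - hM + e * E1
    have hcs : 1 ≤ c ∨ c ≤ -2 := by omega
    have hes : 1 ≤ e ∨ e ≤ -2 := by omega
    rcases hcs with hc1 | hc2 <;> rcases hes with he1 | he2
    · -- c ≥ 1, e ≥ 1 : enumerate g = 1, 2, 3
      have hg3 : g ≤ 3 := by
        by_contra hg4
        push_neg at hg4
        have t1 : 0 ≤ (g - 4) * (c * e) :=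
          mul_nonneg (by linarith only [hg4]) (mul_nonneg (by linarith only [hc1]) (by linarith only [he1]))
        have t2 : 0 ≤ (c - 1) * (e - 1) := mul_nonneg (by linarith only [hc1]) (by linarith only [he1])
        linarith only [hM, t1, t2, hc1, he1]
      rcases (by omega : g = 1 ∨ g = 2 ∨ g = 3) with hgv | hgv | hgv
      · -- g = 1
        have hfac : (c - 1) * (e - 1) = 2 := by linear_combination hM - c * e * hgv
        have hc3 : c ≤ 3 := by
          by_contra hc4
          push_neg at hc4
          rcases (by omega : e = 1 ∨ 2 ≤ e) with hev | hev
          · rw [hev] at hfac; norm_num at hfac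
          · have t2 : 0 ≤ (c - 4) * (e - 2) := mul_nonneg (by linarith only [hc4]) (by linarith only [hev])
            linarith only [hfac, t2, hc4, hev]
        rcases (by omega : c = 1 ∨ c = 2 ∨ c = 3) with hcv | hcv | hcv
        · rw [hcv] at hfac; norm_num at hfac
        · -- (b,c,g,e,f) = (1,2,1,3,0)
          rw [hcv] at hfac hcb
          rw [hgv, hcv] at E1
          have hev : e = 3 := by linarith only [hfac]
          rw [hev] at hcb
          have hbv : b = 1 := by omega
          have hfv : f = 0 := by omega
          rw [hcv, hbv] at hx3 hy3
          rw [hfv] at hx4 hy4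
          exact clash ν hdisjoint i₀ 1 2 2 3 (by norm_num) (by norm_num) (by norm_num)
            (by norm_num) (by linear_combination (-2) * hx3 + (-3) * hx4)
            (by linear_combination (-2) * hy3 + (-3) * hy4)
        · -- (b,c,g,e,f) = (0,3,1,2,1)
          rw [hcv] at hfac hcb
          rw [hgv, hcv] at E1
          have hev : e = 2 := by linarith only [hfac]
          rw [hev] at hcb
          have hbv : b = 0 := by omega
          have hfv : f = 1 := by omega
          rw [hcv, hbv] at hx3 hy3
          rw [hfv] at hx4 hy4
          exact clash ν hdisjoint i₀ 1 1 3 4 (by norm_num) (by norm_num) (by norm_num)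
            (by norm_num) (by linear_combination (-3) * hx3 + (-4) * hx4)
            (by linear_combination (-3) * hy3 + (-4) * hy4)
      · -- g = 2
        have hfac : (2 * c - 1) * (2 * e - 1) = 3 := by
          linear_combination 2 * hM - 2 * c * e * hgv
        have hc2' : c ≤ 2 := by
          by_contra hc4
          push_neg at hc4
          have t2 : 0 ≤ (c - 3) * (2 * e - 1) := mul_nonneg (by linarith only [hc4]) (by linarith only [he1])
          linarith only [hfac, t2, hc4, he1]
        rcases (by omega : c = 1 ∨ c = 2) with hcv | hcv
        · -- (b,c,g,e,f) = (2,1,2,2,0)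
          rw [hcv] at hfac hcb
          rw [hgv, hcv] at E1
          have hev : e = 2 := by linarith only [hfac]
          rw [hev] at hcb
          have hbv : b = 2 := by omega
          have hfv : f = 0 := by omega
          rw [hcv, hbv] at hx3 hy3
          rw [hfv] at hx4 hy4
          exact clash ν hdisjoint i₀ 1 2 2 1 (by norm_num) (by norm_num) (by norm_num)
            (by norm_num) (by linear_combination (-2) * hx3 + (-1) * hx4)
            (by linear_combination (-2) * hy3 + (-1) * hy4)
        · -- (b,c,g,e,f) = (0,2,2,1,2)
          rw [hcv] at hfac hcb
          rw [hgv, hcv] at E1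
          have hev : e = 1 := by linarith only [hfac]
          rw [hev] at hcb
          have hbv : b = 0 := by omega
          have hfv : f = 2 := by omega
          rw [hcv, hbv] at hx3 hy3
          rw [hfv] at hx4 hy4
          exact clash ν hdisjoint i₀ 1 1 5 3 (by norm_num) (by norm_num) (by norm_num)
            (by norm_num) (by linear_combination (-5) * hx3 + (-3) * hx4)
            (by linear_combination (-5) * hy3 + (-3) * hy4)
      · -- g = 3
        have hfac : (3 * c - 1) * (3 * e - 1) = 4 := by
          linear_combination 3 * hM - 3 * c * e * hgv
        have hc1' : c ≤ 1 := by
          by_contra hc4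
          push_neg at hc4
          have t2 : 0 ≤ (c - 2) * (3 * e - 1) := mul_nonneg (by linarith only [hc4]) (by linarith only [he1])
          linarith only [hfac, t2, hc4, he1]
        have hcv : c = 1 := by omega
        -- (b,c,g,e,f) = (1,1,3,1,1)
        rw [hcv] at hfac hcb
        rw [hgv, hcv] at E1
        have hev : e = 1 := by linarith only [hfac]
        rw [hev] at hcb
        have hbv : b = 1 := by omega
        have hfv : f = 1 := by omega
        rw [hcv, hbv] at hx3 hy3
        rw [hfv] at hx4 hy4
        exact clash ν hdisjoint i₀ 1 1 3 1 (by norm_num) (by norm_num) (by norm_num)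
          (by norm_num) (by linear_combination (-3) * hx3 + (-1) * hx4)
          (by linear_combination (-3) * hy3 + (-1) * hy4)
    · -- c ≥ 1, e ≤ -2 : impossible
      have t1 : 0 ≤ (g - 1) * (c * -e) :=
        mul_nonneg (by linarith only [hg1]) (mul_nonneg (by linarith only [hc1]) (by linarith only [he2]))
      have t2 : 0 ≤ (c - 1) * -e := mul_nonneg (by linarith only [hc1]) (by linarith only [he2])
      linarith only [hM, t1, t2, hc1, he2]
    · -- c ≤ -2, e ≥ 1 : impossible
      have t1 : 0 ≤ (g - 1) * (-c * e) :=
        mul_nonneg (by linarith only [hg1]) (mul_nonneg (by linarith only [hc2]) (by linarith only [he1]))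
      have t2 : 0 ≤ -c * (e - 1) := mul_nonneg (by linarith only [hc2]) (by linarith only [he1])
      linarith only [hM, t1, t2, hc2, he1]
    · -- c ≤ -2, e ≤ -2 : impossible
      have t1 : 0 ≤ (g - 1) * (-c * -e) :=
        mul_nonneg (by linarith only [hg1]) (mul_nonneg (by linarith only [hc2]) (by linarith only [he2]))
      have t2 : 0 ≤ (-c - 2) * (-e - 2) := mul_nonneg (by linarith only [hc2]) (by linarith only [he2])
      linarith only [hM, t1, t2, hc2, he2]
  · -- branch g ≤ -2 : impossible
    exfalso
    have hM : g * c * e - c - e - 1 = 0 := by linear_combination e * E1 - E3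
    have hcs : 1 ≤ c ∨ c ≤ -2 := by omega
    have hes : 1 ≤ e ∨ e ≤ -2 := by omega
    rcases hcs with hc1 | hc2 <;> rcases hes with he1 | he2
    · have t1 : 0 ≤ (-g - 2) * (c * e) :=
        mul_nonneg (by linarith only [hgm]) (mul_nonneg (by linarith only [hc1]) (by linarith only [he1]))
      have t2 : 0 ≤ (c - 1) * (e - 1) := mul_nonneg (by linarith only [hc1]) (by linarith only [he1])
      linarith only [hM, t1, t2, hc1, he1]
    · have t1 : 0 ≤ (-g - 2) * (c * -e) :=
        mul_nonneg (by linarith only [hgm]) (mul_nonneg (by linarith only [hc1]) (by linarith only [he2]))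
      have t2 : 0 ≤ c * (-e - 2) := mul_nonneg (by linarith only [hc1]) (by linarith only [he2])
      linarith only [hM, t1, t2, hc1, he2]
    · have t1 : 0 ≤ (-g - 2) * (-c * e) :=
        mul_nonneg (by linarith only [hgm]) (mul_nonneg (by linarith only [hc2]) (by linarith only [he1]))
      have t2 : 0 ≤ e * (-c - 2) := mul_nonneg (by linarith only [he1]) (by linarith only [hc2])
      linarith only [hM, t1, t2, hc2, he1]
    · have t1 : 0 ≤ (-g - 2) * (-c * -e) :=
        mul_nonneg (by linarith only [hgm]) (mul_nonneg (by linarith only [hc2]) (by linarith only [he2]))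
      have t2 : 0 ≤ (-c - 1) * (-e - 1) := mul_nonneg (by linarith only [hc2]) (by linarith only [he2])
      linarith only [hM, t1, t2, hc2, he2]
end

section
/- Let Γ be a weighted circular graph (arising from a complete regular fan with n ≥ 6 rays) containing two vertices with weight −1 that are not adjacent. Then any graph Γ' obtained from Γ by a single combinatorial blow-up also contains two non-adjacent vertices with weight −1. -/
/-- A complete regular 2-dimensional fan, presented as a cyclic sequence
(encoded as an `n`-periodic sequence) of lattice vectors in ℤ² such that each
consecutive pair is a positively oriented ℤ-basis, the 2-dimensional cones
cover the plane and have pairwise disjoint interiors. -/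
structure CircFan where
  n : ℕ
  three_le : 3 ≤ n
  ν : ℕ → ℤ × ℤ
  periodic : ∀ k, ν (k + n) = ν k
  unimodular : ∀ k, det2 (ν k) (ν (k + 1)) = 1
  complete : ∀ x : ℝ × ℝ, ∃ k < n, ∃ s t : ℝ, 0 ≤ s ∧ 0 ≤ t ∧
    x = s • toR (ν k) + t • toR (ν (k + 1))
  disjointInteriors : ∀ k < n, ∀ l < n, k ≠ l → ∀ x : ℝ × ℝ,
    (∃ s t : ℝ, 0 < s ∧ 0 < t ∧ x = s • toR (ν k) + t • toR (ν (k + 1))) →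
    ¬ (∃ s t : ℝ, 0 < s ∧ 0 < t ∧ x = s • toR (ν l) + t • toR (ν (l + 1)))

/-- The weight `wₖ` of the `k`-th vertex, i.e. the unique integer with
`νₖ₋₁ + νₖ₊₁ + wₖ νₖ = 0`; explicitly `wₖ = −det(νₖ₋₁, νₖ₊₁)`. -/
def CircFan.weight (G : CircFan) (k : ℕ) : ℤ :=
  -det2 (G.ν (k + G.n - 1)) (G.ν (k + 1))

/-- `G'` is obtained from `G` by the combinatorial blow-up at the edge
`(νᵢ, νᵢ₊₁)`, inserting the new vertex `νᵢ + νᵢ₊₁`. -/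
def IsBlowUpAt (G G' : CircFan) (i : ℕ) : Prop :=
  i < G.n ∧ G'.n = G.n + 1 ∧
  (∀ k, k ≤ i → G'.ν k = G.ν k) ∧
  G'.ν (i + 1) = G.ν i + G.ν (i + 1) ∧
  (∀ k, i + 1 < k → k ≤ G.n → G'.ν k = G.ν (k - 1))

/-- `G` has exactly one vertex of weight `−1`. -/
def ExactlyOneMinusOne (G : CircFan) : Prop :=
  ∃! k, k < G.n ∧ G.weight k = -1

lemma blowup_new_weight (G G' : CircFan) (i : ℕ) (h : IsBlowUpAt G G' i) :
    G'.weight (i + 1) = -1 := by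
  obtain ⟨hi, hn', h1, h2, h3⟩ := h
  have hn3 := G.three_le
  simp only [CircFan.weight]
  have e1 : i + 1 + G'.n - 1 = i + G'.n := by omega
  rw [e1, G'.periodic, h1 i le_rfl]
  by_cases hcase : i + 1 < G.n
  · rw [h3 (i + 1 + 1) (by omega) (by omega)]
    have e : i + 1 + 1 - 1 = i + 1 := by omega
    rw [e, G.unimodular i]
  · have e2 : i + 1 + 1 = 0 + G'.n := by omega
    rw [e2, G'.periodic, h1 0 (Nat.zero_le _)]
    have e3 : G.ν 0 = G.ν (i + 1) := by
      have e4 : i + 1 = 0 + G.n := by omega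
      rw [e4, G.periodic]
    rw [e3, G.unimodular i]

lemma blowup_old_weight (G G' : CircFan) (i : ℕ) (h : IsBlowUpAt G G' i)
    (q : ℕ) (hq : q < G.n) (hqi : q ≠ i) (hqj : q ≠ (i + 1) % G.n) :
    G'.weight (if q ≤ i then q else q + 1) = G.weight q := by
  obtain ⟨hi, hn', h1, h2, h3⟩ := h
  have hn3 := G.three_le
  simp only [CircFan.weight]
  rcases Nat.lt_or_ge q i with hlt | hge
  · rw [if_pos (le_of_lt hlt)]
    rw [h1 (q + 1) (by omega)]
    rcases Nat.eq_zero_or_pos q with h0 | h0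
    · subst h0
      have hin : i + 1 < G.n := by
        rcases Nat.lt_or_ge (i + 1) G.n with h' | h'
        · exact h'
        · exfalso
          apply hqj
          rw [show i + 1 = G.n by omega, Nat.mod_self]
      have e1 : 0 + G'.n - 1 = G.n := by omega
      rw [e1, h3 G.n (by omega) le_rfl]
      have e2 : 0 + G.n - 1 = G.n - 1 := by omega
      rw [e2]
    · have e1 : q + G'.n - 1 = (q - 1) + G'.n := by omega
      rw [e1, G'.periodic, h1 (q - 1) (by omega)]
      have e2 : q + G.n - 1 = (q - 1) + G.n := by omega
      rw [e2, G.periodic]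
  · have hgt : i < q := lt_of_le_of_ne hge (Ne.symm hqi)
    have hi1n : i + 1 < G.n := by omega
    have hq2 : i + 2 ≤ q := by
      have : q ≠ i + 1 := by rw [Nat.mod_eq_of_lt hi1n] at hqj; exact hqj
      omega
    rw [if_neg (by omega)]
    have e1 : q + 1 + G'.n - 1 = q + G'.n := by omega
    rw [e1, G'.periodic, h3 q (by omega) (by omega)]
    have e2 : q + G.n - 1 = (q - 1) + G.n := by omega
    rw [e2, G.periodic]
    rcases Nat.lt_or_ge (q + 1) G.n with hq1 | hq1
    · rw [h3 (q + 1 + 1) (by omega) (by omega)]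
      have e : q + 1 + 1 - 1 = q + 1 := by omega
      rw [e]
    · have e3 : q + 1 + 1 = 0 + G'.n := by omega
      rw [e3, G'.periodic, h1 0 (Nat.zero_le _)]
      have e4 : q + 1 = 0 + G.n := by omega
      rw [e4, G.periodic]


/-- If a weighted circular graph (from a complete regular fan with `n ≥ 6`
rays) has two non-adjacent vertices of weight `−1`, then any graph obtained
from it by a single combinatorial blow-up also has two non-adjacent vertices
of weight `−1`. -/
theorem blowup_preserves_two_minus_one (G G' : CircFan) (h6 : 6 ≤ G.n)
    (i : ℕ) (h : IsBlowUpAt G G' i)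
    (p q : ℕ) (hp : p < G.n) (hq : q < G.n) (hpq : p ≠ q)
    (hadj₁ : (p + 1) % G.n ≠ q) (hadj₂ : (q + 1) % G.n ≠ p)
    (hwp : G.weight p = -1) (hwq : G.weight q = -1) :
    ∃ p' q' : ℕ, p' < G'.n ∧ q' < G'.n ∧ p' ≠ q' ∧
      (p' + 1) % G'.n ≠ q' ∧ (q' + 1) % G'.n ≠ p' ∧
      G'.weight p' = -1 ∧ G'.weight q' = -1 := by
  have hi : i < G.n := h.1
  have hn' : G'.n = G.n + 1 := h.2.1
  -- at most one of p, q lies in {i, (i+1) % n}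
  have key : (p ≠ i ∧ p ≠ (i + 1) % G.n) ∨ (q ≠ i ∧ q ≠ (i + 1) % G.n) := by
    by_contra hcon
    push_neg at hcon
    obtain ⟨hc1, hc2⟩ := hcon
    by_cases hp1 : p = i
    · by_cases hq1 : q = i
      · exact hpq (hp1.trans hq1.symm)
      · exact hadj₁ (by rw [hp1, hc2 hq1])
    · have hp2 : p = (i + 1) % G.n := hc1 hp1
      by_cases hq1 : q = i
      · exact hadj₂ (by rw [hq1, hp2])
      · exact hpq (hp2.trans (hc2 hq1).symm)
  have main : ∀ r, r < G.n → r ≠ i → r ≠ (i + 1) % G.n → G.weight r = -1 →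
      ∃ p' q' : ℕ, p' < G'.n ∧ q' < G'.n ∧ p' ≠ q' ∧
        (p' + 1) % G'.n ≠ q' ∧ (q' + 1) % G'.n ≠ p' ∧
        G'.weight p' = -1 ∧ G'.weight q' = -1 := by
    intro r hr hri hrj hw
    -- case facts about r relative to i
    have hcase : (r < i ∧ (i + 1 = G.n → r ≠ 0)) ∨ (i + 2 ≤ r ∧ i + 1 < G.n) := by
      rcases Nat.lt_or_ge r i with h' | h'
      · left
        refine ⟨h', fun hieq => ?_⟩
        intro h0
        apply hrj
        rw [h0, hieq, Nat.mod_self]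
      · right
        have hgt : i < r := lt_of_le_of_ne h' (Ne.symm hri)
        have hi1n : i + 1 < G.n := by omega
        have : r ≠ i + 1 := by rw [Nat.mod_eq_of_lt hi1n] at hrj; exact hrj
        omega
    refine ⟨i + 1, if r ≤ i then r else r + 1, by omega, ?_, ?_, ?_, ?_,
      blowup_new_weight G G' i h,
      by rw [blowup_old_weight G G' i h r hr hri hrj]; exact hw⟩
    · split_ifs <;> omega
    · split_ifs <;> omega
    · -- (i + 1 + 1) % G'.n ≠ r'
      rcases Nat.lt_or_ge (i + 2) G'.n with hm | hm
      · rw [show i + 1 + 1 = i + 2 from rfl, Nat.mod_eq_of_lt hm]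
        split_ifs <;> omega
      · rw [show i + 1 + 1 = G'.n by omega, Nat.mod_self]
        split_ifs <;> omega
    · -- (r' + 1) % G'.n ≠ i + 1
      split_ifs with hcond
      · rw [Nat.mod_eq_of_lt (by omega : r + 1 < G'.n)]
        omega
      · rcases Nat.lt_or_ge (r + 1 + 1) G'.n with hm | hm
        · rw [Nat.mod_eq_of_lt hm]
          omega
        · rw [show r + 1 + 1 = G'.n by omega, Nat.mod_self]
          omega
  rcases key with ⟨k1, k2⟩ | ⟨k1, k2⟩
  · exact main p hp k1 k2 hwp
  · exact main q hq k1 k2 hwq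
end
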